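/- arXiv:1909.10658 — 8 statements merged into one kernel-verified Lean document; each statement's English description precedes it below -/
import Mathlib

section
/- Let L be a width-w decision list on n variables and let α ∈ (0,1) with αn an integer. Then the expectation over ρ drawn uniformly from restrictions in {0,1,*}^n with exactly αn stars of the number of useful indices in L↾ρ is at most (4/(1-α))^w. -/
open Finset
open scoped Classical BigOperators

noncomputable section

/-- A term over `n` Boolean variables, given as a partial assignment:
`C i = some b` means the literal `x i = b` appears in the term. -/
abbrev Term (n : ℕ) := Fin n → Option Bool

/-- Satisfaction of a term by an assignment. -/
def TermSat {n : ℕ} (C : Term n) (x : Fin n → Bool) : Prop :=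
  ∀ i b, C i = some b → x i = b

/-- Width of a term: the number of variables it mentions. -/
def termWidth {n : ℕ} (C : Term n) : ℕ :=
  (Finset.univ.filter fun i => C i ≠ none).card

/-- The index function of a decision list with terms `C`:
the first index whose term is satisfied by `x` (and `m` conventionally if none,
since `sInf ∅ = 0`; the default rule hypothesis makes the set nonempty). -/
def DLind {n m : ℕ} (C : Fin m → Term n) (x : Fin n → Bool) : ℕ :=
  sInf {i : ℕ | ∃ h : i < m, TermSat (C ⟨i, h⟩) x}

/-- Evaluation of a decision list with terms `C` and values `v`. -/
def DLeval {n m : ℕ} {V : Type} [Inhabited V] (C : Fin m → Term n)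
    (v : Fin m → V) (x : Fin n → Bool) : V :=
  if h : DLind C x < m then v ⟨DLind C x, h⟩ else default

/-- Probability of an event under the uniform distribution on `{0,1}^n`. -/
def pr (n : ℕ) (P : (Fin n → Bool) → Prop) : ℝ :=
  ((Finset.univ.filter P).card : ℝ) / 2 ^ n

/-- Hit probability of index `i` in the decision list with terms `C`. -/
def pL {n m : ℕ} (C : Fin m → Term n) (i : ℕ) : ℝ :=
  pr n fun x => DLind C x = i

/-- The index function of the sub-decision-list `L|_J`. -/
def DLindSub {n m : ℕ} (C : Fin m → Term n) (J : Finset (Fin m)) (x : Fin n → Bool) : ℕ :=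
  sInf {i : ℕ | ∃ h : i < m, (⟨i, h⟩ : Fin m) ∈ J ∧ TermSat (C ⟨i, h⟩) x}

/-- Evaluation of the sub-decision-list `L|_J`. -/
def DLevalSub {n m : ℕ} {V : Type} [Inhabited V] (C : Fin m → Term n) (v : Fin m → V)
    (J : Finset (Fin m)) (x : Fin n → Bool) : V :=
  if h : DLindSub C J x < m then v ⟨DLindSub C J x, h⟩ else default

/-- A restriction: `some b` fixes a coordinate to `b`, `none` is a star. -/
abbrev Restriction (n : ℕ) := Fin n → Option Bool

/-- `x` is a completion of the restriction `ρ`. -/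
def Compatible {n : ℕ} (ρ : Restriction n) (x : Fin n → Bool) : Prop :=
  ∀ i b, ρ i = some b → x i = b

/-- Number of stars of a restriction. -/
def stars {n : ℕ} (ρ : Restriction n) : ℕ :=
  (Finset.univ.filter fun i => ρ i = none).card

/-- Weight of a restriction under the product distribution `U(n, α)`:
each coordinate independently `*` with probability `α`, and `0` or `1`
each with probability `(1-α)/2`. -/
def restW {n : ℕ} (α : ℝ) (ρ : Restriction n) : ℝ :=
  ∏ i : Fin n, if ρ i = none then α else (1 - α) / 2

/-- Index `i` is useful in the restricted decision list `L↾ρ`: some completion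
of `ρ` hits rule `i`. -/
def Useful {n m : ℕ} (C : Fin m → Term n) (ρ : Restriction n) (i : Fin m) : Prop :=
  ∃ x, Compatible ρ x ∧ DLind C x = i.val

/-- Number of useful indices of `L↾ρ`. -/
def useNum {n m : ℕ} (C : Fin m → Term n) (ρ : Restriction n) : ℕ :=
  (Finset.univ.filter fun i : Fin m => Useful C ρ i).card

/-- `q_L(α, i)`: probability over `ρ ~ U(n, α)` that index `i` is useful in `L↾ρ`. -/
def qL {n m : ℕ} (C : Fin m → Term n) (α : ℝ) (i : Fin m) : ℝ :=
  ∑ ρ : Restriction n, restW α ρ * (if Useful C ρ i then 1 else 0)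

/-- Transition weight of the `β`-noise on a single bit. -/
def noiseW (β : ℝ) (a b : Bool) : ℝ := if a = b then (1 + β) / 2 else (1 - β) / 2

/-- Joint density of `(x, y)` where `x` is uniform and `y ~ N_β(x)`. -/
def pairW {n : ℕ} (β : ℝ) (x y : Fin n → Bool) : ℝ :=
  (1 / 2) ^ n * ∏ i : Fin n, noiseW β (x i) (y i)

/-- `Stab_L(β, i) = Pr[Ind L(x) = Ind L(y) = i]` for `x` uniform, `y ~ N_β(x)`. -/
def StabInd {n m : ℕ} (C : Fin m → Term n) (β : ℝ) (i : Fin m) : ℝ :=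
  ∑ x : Fin n → Bool, ∑ y : Fin n → Bool,
    pairW β x y * (if DLind C x = i.val ∧ DLind C y = i.val then 1 else 0)

/-- `Stab_β(g) = Pr[g(x) = g(y) = 1]` for `x` uniform, `y ~ N_β(x)`. -/
def stab {n : ℕ} (β : ℝ) (g : (Fin n → Bool) → Bool) : ℝ :=
  ∑ x : Fin n → Bool, ∑ y : Fin n → Bool,
    pairW β x y * (if g x = true ∧ g y = true then 1 else 0)

/-- Probability weight that a uniform completion of `ρ` equals `x`. -/
def compW {n : ℕ} (ρ : Restriction n) (x : Fin n → Bool) : ℝ :=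
  if Compatible ρ x then (1 / 2) ^ stars ρ else 0

/-- Evaluation of a DNF with terms `T`. -/
def DNFeval {n M : ℕ} (T : Fin M → Term n) (x : Fin n → Bool) : Prop :=
  ∃ t, TermSat (T t) x

/-! Encoding argument. If `i` is useful for `ρ`, witnessed by a completion `x`, fill the stars
of `ρ` lying on the variables of `C i` with the literals of `C i`. The resulting `σ` forces `C i`
while `i` stays useful, and `ρ` is recovered from `σ` and the set `T` of filled stars; so the pairs
`(ρ, i)` with `i` useful and `ρ ∈ R(n, k)` inject into triples `(i, T, σ)` with `T ⊆ vars (C i)`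
and `σ ∈ R(n, k - #T)`. A restriction forces a useful index for at most one `i`, since a later
forced index would preempt an earlier useful one, and `#T ≤ w`; hence the total is at most
`∑ₛ (w choose s) |R(n, k - s)|`. As `k = αn`, `|R(n, k - s)| ≤ (2α / (1 - α))ˢ |R(n, k)|`, and the
binomial theorem leaves `((1 + α) / (1 - α))ʷ ≤ (4 / (1 - α))ʷ`. -/

namespace DecisionList

variable {n m : ℕ}

def starSet (ρ : Restriction n) : Finset (Fin n) := univ.filter fun t => ρ t = none

def vars (D : Term n) : Finset (Fin n) := univ.filter fun t => D t ≠ none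

def fillStars (D : Term n) (ρ : Restriction n) : Restriction n :=
  fun t => if ρ t = none then D t else ρ t

lemma starSet_fillStars (D : Term n) (ρ : Restriction n) :
    starSet (fillStars D ρ) = starSet ρ \ vars D := by
  ext t
  simp only [starSet, vars, mem_sdiff, mem_filter, mem_univ, true_and]
  unfold fillStars
  split_ifs <;> simp_all

lemma stars_fillStars_add (D : Term n) (ρ : Restriction n) :
    stars (fillStars D ρ) + #(starSet ρ ∩ vars D) = stars ρ := by
  rw [stars, ← starSet, starSet_fillStars, card_sdiff_add_card_inter]; rfl

lemma eq_of_fillStars_eq {D : Term n} {ρ ρ' : Restriction n}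
    (hS : starSet ρ ∩ vars D = starSet ρ' ∩ vars D) (hF : fillStars D ρ = fillStars D ρ') :
    ρ = ρ' := by
  funext t
  have hSt := congrArg (t ∈ ·) hS
  have hFt := congr_fun hF t
  simp only [starSet, vars, mem_inter, mem_filter, mem_univ, true_and, eq_iff_iff] at hSt
  simp only [fillStars] at hFt
  grind

lemma compatible_fillStars {D : Term n} {ρ : Restriction n} {x : Fin n → Bool}
    (hx : Compatible ρ x) (hD : TermSat D x) : Compatible (fillStars D ρ) x := by
  intro t b hb
  unfold fillStars at hb
  split_ifs at hb
  exacts [hD t b hb, hx t b hb]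

lemma termSat_of_compatible_fillStars {D : Term n} {ρ : Restriction n} {x y : Fin n → Bool}
    (hx : Compatible ρ x) (hD : TermSat D x) (hy : Compatible (fillStars D ρ) y) :
    TermSat D y := by
  intro t b hb
  cases hρ : ρ t with
  | none => exact hy t b (by simp [fillStars, hρ, hb])
  | some c => rw [hy t c (by simp [fillStars, hρ]), ← hx t c hρ, hD t b hb]

lemma DLind_le_of_termSat {C : Fin m → Term n} {x : Fin n → Bool} {i : Fin m}
    (h : TermSat (C i) x) : DLind C x ≤ i := Nat.sInf_le ⟨i.isLt, h⟩

lemma termSat_of_DLind_eq {C : Fin m → Term n} (hm : 0 < m)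
    (hlast : C ⟨m - 1, Nat.sub_lt hm one_pos⟩ = fun _ => none)
    {x : Fin n → Bool} {i : Fin m} (h : DLind C x = i) : TermSat (C i) x := by
  have hne : {j : ℕ | ∃ h : j < m, TermSat (C ⟨j, h⟩) x}.Nonempty :=
    ⟨m - 1, Nat.sub_lt hm one_pos, by rw [hlast]; intro _ _ h; cases h⟩
  obtain ⟨hlt, hsat⟩ : ∃ h : DLind C x < m, TermSat (C ⟨DLind C x, h⟩) x := Nat.sInf_mem hne
  rwa [show (⟨DLind C x, hlt⟩ : Fin m) = i from Fin.ext h] at hsat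

def ForcedUseful (C : Fin m → Term n) (σ : Restriction n) (i : Fin m) : Prop :=
  (∀ x, Compatible σ x → TermSat (C i) x) ∧ Useful C σ i

lemma ForcedUseful.le_of_useful {C : Fin m → Term n} {σ : Restriction n} {i j : Fin m}
    (hi : ForcedUseful C σ i) (hj : Useful C σ j) : j ≤ i := by
  obtain ⟨x, hx, hxj⟩ := hj
  exact Fin.le_iff_val_le_val.2 (hxj ▸ DLind_le_of_termSat (hi.1 x hx))

lemma ForcedUseful.unique {C : Fin m → Term n} {σ : Restriction n} {i j : Fin m}
    (hi : ForcedUseful C σ i) (hj : ForcedUseful C σ j) : i = j :=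
  le_antisymm (hj.le_of_useful hi.2) (hi.le_of_useful hj.2)

lemma sum_card_forcedUseful_le (C : Fin m → Term n) (s : Finset (Restriction n)) :
    ∑ i, #{σ ∈ s | ForcedUseful C σ i} ≤ #s := by
  calc ∑ i, #{σ ∈ s | ForcedUseful C σ i} = ∑ σ ∈ s, #{i | ForcedUseful C σ i} := by
        simp only [card_filter]
        exact sum_comm
    _ ≤ ∑ σ ∈ s, 1 := sum_le_sum fun σ _ =>
        card_le_one.2 fun i hi j hj => (mem_filter.1 hi).2.unique (mem_filter.1 hj).2
    _ = #s := (card_eq_sum_ones s).symm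

lemma card_useful_le_sum_powerset {C : Fin m → Term n} (hm : 0 < m)
    (hlast : C ⟨m - 1, Nat.sub_lt hm one_pos⟩ = fun _ => none) (k : ℕ) (i : Fin m) :
    #{ρ : Restriction n | stars ρ = k ∧ Useful C ρ i} ≤
      ∑ T ∈ (vars (C i)).powerset,
        #{σ : Restriction n | stars σ + #T = k ∧ ForcedUseful C σ i} := by
  rw [← card_sigma]
  refine card_le_card_of_injOn (fun ρ => ⟨starSet ρ ∩ vars (C i), fillStars (C i) ρ⟩) ?_ ?_
  · intro ρ hρ
    obtain ⟨hk, x, hx, hxi⟩ := (mem_filter.1 hρ).2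
    have hsat := termSat_of_DLind_eq hm hlast hxi
    simp only [mem_coe, mem_sigma, mem_powerset, mem_filter, mem_univ, true_and]
    exact ⟨inter_subset_right, (stars_fillStars_add _ _).trans hk,
      fun y hy => termSat_of_compatible_fillStars hx hsat hy, x, compatible_fillStars hx hsat, hxi⟩
  · intro ρ _ ρ' _ h
    obtain ⟨hS, hF⟩ := Sigma.mk.inj_iff.1 h
    exact eq_of_fillStars_eq hS (eq_of_heq hF)

lemma sum_powerset_le_sum_choose {α : Type*} {V : Finset α} {w : ℕ} (hV : #V ≤ w) (g : ℕ → ℕ) :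
    ∑ T ∈ V.powerset, g #T ≤ ∑ s ∈ range (w + 1), w.choose s * g s := by
  rw [sum_powerset_apply_card]
  calc ∑ s ∈ range (#V + 1), (#V).choose s • g s ≤ ∑ s ∈ range (#V + 1), w.choose s * g s :=
        sum_le_sum fun s _ => Nat.mul_le_mul_right _ (Nat.choose_le_choose s hV)
    _ ≤ _ := sum_le_sum_of_subset (range_subset_range.2 (by omega))

lemma sum_useNum_le {C : Fin m → Term n} (hm : 0 < m)
    (hlast : C ⟨m - 1, Nat.sub_lt hm one_pos⟩ = fun _ => none) {w : ℕ}
    (hw : ∀ j, termWidth (C j) ≤ w) (k : ℕ) :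
    ∑ ρ ∈ univ.filter (fun ρ : Restriction n => stars ρ = k), useNum C ρ ≤
      ∑ s ∈ range (w + 1), w.choose s * #{σ : Restriction n | stars σ + s = k} := by
  calc ∑ ρ ∈ univ.filter (fun ρ : Restriction n => stars ρ = k), useNum C ρ
        = ∑ i, #{ρ : Restriction n | stars ρ = k ∧ Useful C ρ i} := by
        simp only [useNum, card_filter, sum_filter, ite_and]
        rw [Finset.sum_comm]
        simp only [sum_ite_irrel, sum_const_zero]
    _ ≤ ∑ i, ∑ s ∈ range (w + 1),
          w.choose s * #{σ : Restriction n | stars σ + s = k ∧ ForcedUseful C σ i} :=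
        sum_le_sum fun i _ => (card_useful_le_sum_powerset hm hlast k i).trans
          (sum_powerset_le_sum_choose (hw i) fun s => #{σ | stars σ + s = k ∧ ForcedUseful C σ i})
    _ = ∑ s ∈ range (w + 1),
          w.choose s * ∑ i, #{σ : Restriction n | stars σ + s = k ∧ ForcedUseful C σ i} := by
        rw [sum_comm]
        simp only [mul_sum]
    _ ≤ _ := sum_le_sum fun s _ => Nat.mul_le_mul_left _ <| by
        simpa only [filter_filter] using sum_card_forcedUseful_le C {σ | stars σ + s = k}

lemma card_starSet_eq (T : Finset (Fin n)) :
    #{ρ : Restriction n | starSet ρ = T} = 2 ^ (n - #T) := by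
  have hpi : ({ρ : Restriction n | starSet ρ = T} : Finset _) = Fintype.piFinset fun t =>
      if t ∈ T then ({none} : Finset (Option Bool)) else {some false, some true} := by
    ext ρ
    simp only [mem_filter, mem_univ, true_and, Fintype.mem_piFinset, Finset.ext_iff, starSet]
    refine forall_congr' fun t => ?_
    split_ifs with ht <;> rcases ρ t with _ | _ | _ <;> simp [ht]
  rw [hpi, Fintype.card_piFinset]
  simp [apply_ite card, prod_ite, filter_notMem_eq_sdiff, card_univ_sdiff]

lemma card_stars_eq (n j : ℕ) :
    #{ρ : Restriction n | stars ρ = j} = n.choose j * 2 ^ (n - j) := by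
  rw [card_eq_sum_card_fiberwise (f := starSet) (s := {ρ : Restriction n | stars ρ = j})
    (t := powersetCard j univ) fun ρ hρ =>
    mem_powersetCard.2 ⟨subset_univ _, (mem_filter.1 hρ).2⟩]
  calc ∑ T ∈ powersetCard j univ, #{ρ ∈ {ρ : Restriction n | stars ρ = j} | starSet ρ = T}
      = ∑ T ∈ powersetCard j univ, 2 ^ (n - j) := sum_congr rfl fun T hT => by
        rw [← (mem_powersetCard.1 hT).2, ← card_starSet_eq, filter_filter]
        congr 1
        exact filter_congr fun ρ _ => and_iff_right_of_imp fun h => h ▸ rfl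
    _ = n.choose j * 2 ^ (n - j) := by simp [card_powersetCard]

lemma choose_le_pow_mul_choose {n j k s : ℕ} {r : ℝ} (hr : 0 ≤ r) (hkn : k ≤ n)
    (hk : (k : ℝ) ≤ r * (n - k)) (h : j + s = k) : (n.choose j : ℝ) ≤ r ^ s * n.choose k := by
  induction s generalizing j with
  | zero => simp [← h]
  | succ s ih =>
    have hjn : j < n := by omega
    have hsucc : (n.choose (j + 1) : ℝ) * (j + 1) = n.choose j * (n - j) := by
      rw [← Nat.cast_sub hjn.le]
      exact_mod_cast Nat.choose_succ_right_eq n j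
    have hnj : (0 : ℝ) < n - j := sub_pos.2 (by exact_mod_cast hjn)
    have hj1 : (j + 1 : ℝ) ≤ r * (n - j) :=
      calc (j + 1 : ℝ) ≤ k := by exact_mod_cast (show j + 1 ≤ k by omega)
        _ ≤ r * (n - k) := hk
        _ ≤ r * (n - j) := by gcongr; exact_mod_cast (show j ≤ k by omega)
    refine le_of_mul_le_mul_right ?_ hnj
    calc (n.choose j : ℝ) * (n - j) = n.choose (j + 1) * (j + 1) := hsucc.symm
      _ ≤ (r ^ s * n.choose k) * (r * (n - j)) :=
        mul_le_mul (ih (by omega)) hj1 (by positivity) (by positivity)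
      _ = r ^ (s + 1) * n.choose k * (n - j) := by ring

lemma card_stars_add_le {n k : ℕ} {r : ℝ} (hr : 0 ≤ r) (hkn : k ≤ n)
    (hk : (k : ℝ) ≤ r * (n - k)) (s : ℕ) :
    (#{σ : Restriction n | stars σ + s = k} : ℝ) ≤
      (2 * r) ^ s * #{ρ : Restriction n | stars ρ = k} := by
  by_cases hs : s ≤ k
  · obtain ⟨j, rfl⟩ : ∃ j, k = j + s := ⟨k - s, by omega⟩
    simp only [add_left_inj, card_stars_eq]
    rw [show n - j = n - (j + s) + s by omega]
    push_cast
    calc (n.choose j : ℝ) * 2 ^ (n - (j + s) + s)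
        ≤ (r ^ s * n.choose (j + s)) * 2 ^ (n - (j + s) + s) := by
          gcongr
          exact choose_le_pow_mul_choose hr hkn hk rfl
      _ = (2 * r) ^ s * (n.choose (j + s) * 2 ^ (n - (j + s))) := by ring
  · rw [filter_false_of_mem fun σ _ => by omega, card_empty, Nat.cast_zero]
    positivity

lemma sum_choose_mul_card_stars_add_le {n k : ℕ} {r : ℝ} (hr : 0 ≤ r) (hkn : k ≤ n)
    (hk : (k : ℝ) ≤ r * (n - k)) (w : ℕ) :
    ∑ s ∈ range (w + 1), (w.choose s : ℝ) * #{σ : Restriction n | stars σ + s = k} ≤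
      (2 * r + 1) ^ w * #{ρ : Restriction n | stars ρ = k} := by
  rw [add_pow, sum_mul]
  refine sum_le_sum fun s _ => ?_
  calc (w.choose s : ℝ) * #{σ : Restriction n | stars σ + s = k}
      ≤ w.choose s * ((2 * r) ^ s * #{ρ : Restriction n | stars ρ = k}) := by
        gcongr
        exact card_stars_add_le hr hkn hk s
    _ = (2 * r) ^ s * 1 ^ (w - s) * w.choose s * #{ρ : Restriction n | stars ρ = k} := by ring

end DecisionList

open DecisionList

theorem useNum_fixed_stars_bound {n m w k : ℕ} (C : Fin m → Term n) (α : ℝ)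
    (hα0 : 0 < α) (hα1 : α < 1) (hk : (k : ℝ) = α * n)
    (hw : ∀ j, termWidth (C j) ≤ w)
    (hm : 0 < m) (hlast : C ⟨m - 1, Nat.sub_lt hm one_pos⟩ = fun _ => none) :
    (∑ ρ ∈ Finset.univ.filter (fun ρ : Restriction n => stars ρ = k), (useNum C ρ : ℝ)) /
      ((Finset.univ.filter (fun ρ : Restriction n => stars ρ = k)).card : ℝ) ≤
      (4 / (1 - α)) ^ w := by
  have h1α : 0 < 1 - α := sub_pos.2 hα1
  set r := α / (1 - α)
  have hr : 0 ≤ r := by positivity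
  have hr1α : r * (1 - α) = α := div_mul_cancel₀ α h1α.ne'
  have hkn : k ≤ n := by exact_mod_cast hk.trans_le (mul_le_of_le_one_left n.cast_nonneg hα1.le)
  have hkr : (k : ℝ) ≤ r * (n - k) := by
    rw [hk, show (n : ℝ) - α * n = (1 - α) * n by ring, ← mul_assoc, hr1α]
  have hr4 : 2 * r + 1 ≤ 4 / (1 - α) := by
    rw [le_div_iff₀ h1α, add_mul, mul_assoc, hr1α]
    linarith
  have hpos : (0 : ℝ) < #{ρ : Restriction n | stars ρ = k} := by
    rw [card_stars_eq]
    have := Nat.choose_pos hkn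
    positivity
  rw [div_le_iff₀ hpos]
  calc ∑ ρ ∈ univ.filter (fun ρ : Restriction n => stars ρ = k), (useNum C ρ : ℝ)
      ≤ ∑ s ∈ range (w + 1), (w.choose s : ℝ) * #{σ : Restriction n | stars σ + s = k} := by
        exact_mod_cast sum_useNum_le hm hlast hw k
    _ ≤ (2 * r + 1) ^ w * #{ρ : Restriction n | stars ρ = k} :=
        sum_choose_mul_card_stars_add_le hr hkn hkr w
    _ ≤ (4 / (1 - α)) ^ w * #{ρ : Restriction n | stars ρ = k} := by gcongr
end
end

section
/- Let L be a width-w decision list on n variables and α ∈ (0,1). Then E_{ρ ~ U(n,α)}[useNum(L↾ρ)] ≤ (4/(1-α))^w, where U(n,α) independently sets each coordinate to 0, 1, * with probabilities (1-α)/2, (1-α)/2, α. -/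
open Finset
open scoped Classical BigOperators

noncomputable section

namespace ExpectedUseNumAux

variable {n m : ℕ}

/-- The first `k` terms are jointly avoidable by some completion of `ρ`. -/
def Av (C : Fin m → Term n) (k : ℕ) (ρ : Restriction n) : Prop :=
  ∃ x, Compatible ρ x ∧ ∀ (j : ℕ) (hj : j < m), j < k → ¬ TermSat (C ⟨j, hj⟩) x

/-- Probability that the first `k` terms are jointly avoidable. -/
def PP (C : Fin m → Term n) (α : ℝ) (k : ℕ) : ℝ :=
  ∑ ρ : Restriction n, restW α ρ * (if Av C k ρ then 1 else 0)

lemma av_succ {C : Fin m → Term n} {k : ℕ} {ρ : Restriction n}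
    (h : Av C (k + 1) ρ) : Av C k ρ := by
  obtain ⟨x, hc, ha⟩ := h
  exact ⟨x, hc, fun j hj hjk => ha j hj (Nat.lt_succ_of_lt hjk)⟩

lemma restW_nonneg {α : ℝ} (hα0 : 0 < α) (hα1 : α < 1) (ρ : Restriction n) :
    0 ≤ restW α ρ := by
  refine Finset.prod_nonneg fun v _ => ?_
  split <;> nlinarith

lemma useful_witness {C : Fin m → Term n} (hm : 0 < m)
    (hlast : C ⟨m - 1, Nat.sub_lt hm one_pos⟩ = fun _ => none)
    {ρ : Restriction n} {i : Fin m} (h : Useful C ρ i) :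
    ∃ x, Compatible ρ x ∧ TermSat (C i) x ∧
      ∀ (j : ℕ) (hj : j < m), j < i.val → ¬ TermSat (C ⟨j, hj⟩) x := by
  obtain ⟨x, hc, hind⟩ := h
  have hSne : {j : ℕ | ∃ h : j < m, TermSat (C ⟨j, h⟩) x}.Nonempty := by
    refine ⟨m - 1, Nat.sub_lt hm one_pos, ?_⟩
    rw [hlast]
    intro v b hb
    simp at hb
  have hmem := Nat.sInf_mem hSne
  simp only [DLind] at hind
  rw [hind] at hmem
  obtain ⟨hlt, hsat⟩ := hmem
  refine ⟨x, hc, ?_, ?_⟩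
  · have hee : (⟨i.val, hlt⟩ : Fin m) = i := rfl
    rwa [hee] at hsat
  · intro j hj hji hsatj
    have hjS : j ∈ {j : ℕ | ∃ h : j < m, TermSat (C ⟨j, h⟩) x} := ⟨hj, hsatj⟩
    have := Nat.sInf_le hjS
    rw [hind] at this
    omega

/-- Key per-index bound. -/
lemma key_bound {w : ℕ} (C : Fin m → Term n) (α : ℝ)
    (hα0 : 0 < α) (hα1 : α < 1)
    (hw : ∀ j, termWidth (C j) ≤ w)
    (hm : 0 < m) (hlast : C ⟨m - 1, Nat.sub_lt hm one_pos⟩ = fun _ => none)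
    (i : Fin m) :
    (∑ ρ : Restriction n, restW α ρ * (if Useful C ρ i then 1 else 0))
      ≤ ((1 + α) / (1 - α)) ^ w * (PP C α i.val - PP C α (i.val + 1)) := by
  have h1α : (0:ℝ) < 1 - α := by linarith
  set μ : ℝ := (1 - α) / 2 with hμdef
  have hμpos : 0 < μ := by positivity
  set β : ℝ := (1 + α) / (1 - α) with hβdef
  have hβ1 : 1 ≤ β := by
    rw [hβdef, le_div_iff₀ h1α]; linarith
  have hβμ : α + μ = β * μ := by
    rw [hβdef, hμdef]; field_simp; ring
  -- the filling map
  set Φ : Restriction n → Restriction n :=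
    fun ρ v => if C i v = none then ρ v else C i v with hΦdef
  -- pointwise indicator identity
  have hpt : ∀ ρ : Restriction n,
      (if Av C i.val ρ then (1:ℝ) else 0) - (if Av C (i.val + 1) ρ then 1 else 0)
        = if Av C i.val ρ ∧ ¬ Av C (i.val + 1) ρ then 1 else 0 := by
    intro ρ
    by_cases h1 : Av C (i.val + 1) ρ
    · simp [h1, av_succ h1]
    · by_cases h2 : Av C i.val ρ <;> simp [h1, h2]
  have hRHS : PP C α i.val - PP C α (i.val + 1)
      = ∑ ρ' : Restriction n, restW α ρ' *
          (if Av C i.val ρ' ∧ ¬ Av C (i.val + 1) ρ' then 1 else 0) := by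
    rw [PP, PP, ← Finset.sum_sub_distrib]
    exact Finset.sum_congr rfl fun ρ _ => by rw [← mul_sub, hpt ρ]
  rw [hRHS, Finset.mul_sum]
  rw [← Finset.sum_fiberwise Finset.univ Φ
        (fun ρ => restW α ρ * (if Useful C ρ i then 1 else 0))]
  refine Finset.sum_le_sum fun ρ' _ => ?_
  -- rewrite inner sum as a filtered sum
  have hinner :
      (∑ ρ ∈ Finset.univ.filter (fun ρ => Φ ρ = ρ'),
          restW α ρ * (if Useful C ρ i then (1:ℝ) else 0))
        = ∑ ρ ∈ Finset.univ.filter (fun ρ => Φ ρ = ρ' ∧ Useful C ρ i), restW α ρ := by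
    calc (∑ ρ ∈ Finset.univ.filter (fun ρ => Φ ρ = ρ'),
            restW α ρ * (if Useful C ρ i then (1:ℝ) else 0))
        = ∑ ρ ∈ Finset.univ.filter (fun ρ => Φ ρ = ρ'),
            (if Useful C ρ i then restW α ρ else 0) := by
          exact Finset.sum_congr rfl fun ρ _ => by
            by_cases h : Useful C ρ i <;> simp [h]
      _ = ∑ ρ ∈ (Finset.univ.filter (fun ρ => Φ ρ = ρ')).filter (fun ρ => Useful C ρ i),
            restW α ρ := (Finset.sum_filter _ _).symm
      _ = ∑ ρ ∈ Finset.univ.filter (fun ρ => Φ ρ = ρ' ∧ Useful C ρ i), restW α ρ := by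
          rw [Finset.filter_filter]
  rw [hinner]
  by_cases hex : ∃ ρ₀, Φ ρ₀ = ρ' ∧ Useful C ρ₀ i
  swap
  · have hempty : Finset.univ.filter (fun ρ => Φ ρ = ρ' ∧ Useful C ρ i) = ∅ := by
      refine Finset.filter_eq_empty_iff.mpr fun ρ _ => ?_
      intro hcon
      exact hex ⟨ρ, hcon⟩
    rw [hempty, Finset.sum_empty]
    have h0 : (0:ℝ) ≤ restW α ρ' * (if Av C i.val ρ' ∧ ¬ Av C (i.val + 1) ρ' then 1 else 0) := by
      refine mul_nonneg (restW_nonneg hα0 hα1 ρ') ?_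
      split <;> norm_num
    have hb0 : (0:ℝ) ≤ β ^ w := by positivity
    exact mul_nonneg hb0 h0
  obtain ⟨ρ₀, hΦ0, hU0⟩ := hex
  obtain ⟨x, hxc, hxs, hxa⟩ := useful_witness hm hlast hU0
  have hρ'supp : ∀ v, C i v ≠ none → ρ' v = C i v := by
    intro v hv
    rw [← hΦ0]
    simp [hΦdef, hv]
  -- ρ' lies in the target event
  have hD : Av C i.val ρ' ∧ ¬ Av C (i.val + 1) ρ' := by
    constructor
    · refine ⟨x, ?_, fun j hj hji => hxa j hj hji⟩
      intro v b hb
      by_cases hv : C i v = none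
      · rw [← hΦ0] at hb
        simp only [hΦdef, hv, if_pos] at hb
        exact hxc v b hb
      · rw [hρ'supp v hv] at hb
        exact hxs v b hb
    · rintro ⟨y, hyc, hya⟩
      refine hya i.val i.isLt (Nat.lt_succ_self _) ?_
      intro v b hb
      refine hyc v b ?_
      rw [hρ'supp v (by rw [hb]; exact Option.some_ne_none b)]
      exact hb
  rw [if_pos hD, mul_one]
  -- bound the fiber sum by a product over a pi-set
  set f : Option Bool → ℝ := fun a => if a = none then α else μ with hfdef
  set t : Fin n → Finset (Option Bool) :=
    fun v => if C i v = none then {ρ' v} else ({none, C i v} : Finset (Option Bool)) with htdef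
  have hsub : Finset.univ.filter (fun ρ => Φ ρ = ρ' ∧ Useful C ρ i)
      ⊆ Fintype.piFinset t := by
    intro ρ hρ
    simp only [Finset.mem_filter] at hρ
    obtain ⟨-, hΦρ, hUρ⟩ := hρ
    obtain ⟨x', hx'c, hx's, -⟩ := useful_witness hm hlast hUρ
    rw [Fintype.mem_piFinset]
    intro v
    have htv : t v = if C i v = none then {ρ' v} else ({none, C i v} : Finset (Option Bool)) := rfl
    by_cases hv : C i v = none
    · rw [htv, if_pos hv, Finset.mem_singleton, ← hΦρ]
      simp [hΦdef, hv]
    · rw [htv, if_neg hv, Finset.mem_insert, Finset.mem_singleton]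
      obtain ⟨b, hb⟩ : ∃ b, C i v = some b := by
        cases hcv : C i v with
        | none => exact absurd hcv hv
        | some b => exact ⟨b, rfl⟩
      rcases hρv : ρ v with _ | c
      · exact Or.inl rfl
      · refine Or.inr ?_
        have h1 : x' v = c := hx'c v c hρv
        have h2 : x' v = b := hx's v b hb
        rw [hb]
        exact congrArg some (h1.symm.trans h2)
  have hnonneg : ∀ ρ ∈ Fintype.piFinset t,
      ρ ∉ Finset.univ.filter (fun ρ => Φ ρ = ρ' ∧ Useful C ρ i) → 0 ≤ restW α ρ :=
    fun ρ _ _ => restW_nonneg hα0 hα1 ρ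
  refine le_trans (Finset.sum_le_sum_of_subset_of_nonneg hsub hnonneg) ?_
  -- compute the pi-set sum
  have hpisum : (∑ ρ ∈ Fintype.piFinset t, restW α ρ)
      = ∏ v : Fin n, ∑ a ∈ t v, f a := by
    calc (∑ ρ ∈ Fintype.piFinset t, restW α ρ)
        = ∑ ρ ∈ Fintype.piFinset t, ∏ v : Fin n, f (ρ v) := by
          refine Finset.sum_congr rfl fun ρ _ => ?_
          simp [restW, hfdef, hμdef]
      _ = ∏ v : Fin n, ∑ a ∈ t v, f a :=
          (Finset.prod_univ_sum t (fun _ a => f a)).symm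
  rw [hpisum]
  have hsumv : ∀ v : Fin n, (∑ a ∈ t v, f a)
      = if C i v = none then f (ρ' v) else α + μ := by
    intro v
    by_cases hv : C i v = none
    · rw [if_pos hv]
      have ht : t v = {ρ' v} := by simp [htdef, hv]
      rw [ht, Finset.sum_singleton]
    · rw [if_neg hv]
      have ht : t v = ({none, C i v} : Finset (Option Bool)) := by simp [htdef, hv]
      have hne : (none : Option Bool) ≠ C i v := fun h => hv h.symm
      rw [ht, Finset.sum_pair hne]
      have h1 : f none = α := by simp [hfdef]
      have h2 : f (C i v) = μ := by simp [hfdef, hv]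
      rw [h1, h2]
  have hw' : ∏ v : Fin n, (∑ a ∈ t v, f a)
      = ∏ v : Fin n, (if C i v = none then f (ρ' v) else α + μ) :=
    Finset.prod_congr rfl fun v _ => hsumv v
  rw [hw']
  have hρ'w : restW α ρ' = ∏ v : Fin n, (if C i v = none then f (ρ' v) else μ) := by
    rw [restW]
    refine Finset.prod_congr rfl fun v _ => ?_
    by_cases hv : C i v = none
    · rw [if_pos hv]
    · have hv' : ρ' v = C i v := hρ'supp v hv
      have hv'' : ρ' v ≠ none := by rw [hv']; exact hv
      rw [if_neg hv, if_neg hv'']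
  rw [hρ'w]
  -- split products
  rw [Finset.prod_ite (fun v => f (ρ' v)) (fun _ => α + μ),
      Finset.prod_ite (fun v => f (ρ' v)) (fun _ => μ)]
  rw [Finset.prod_const, Finset.prod_const]
  set A : ℝ := ∏ v ∈ Finset.univ.filter (fun v => C i v = none), f (ρ' v) with hAdef
  set k : ℕ := (Finset.univ.filter (fun v => ¬ C i v = none)).card with hkdef
  have hA0 : 0 ≤ A := by
    refine Finset.prod_nonneg fun v _ => ?_
    simp only [hfdef]
    split <;> nlinarith
  have hkw : k ≤ w := by
    have := hw i
    rw [termWidth] at this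
    rw [hkdef]
    convert this using 2
  have hstep : A * (α + μ) ^ k ≤ β ^ w * (A * μ ^ k) := by
    rw [hβμ, mul_pow]
    have hb : β ^ k ≤ β ^ w := pow_le_pow_right₀ hβ1 hkw
    have hμk : (0:ℝ) ≤ μ ^ k := by positivity
    calc A * (β ^ k * μ ^ k) ≤ A * (β ^ w * μ ^ k) := by
          refine mul_le_mul_of_nonneg_left ?_ hA0
          exact mul_le_mul_of_nonneg_right hb hμk
      _ = β ^ w * (A * μ ^ k) := by ring
  exact hstep

end ExpectedUseNumAux
theorem expected_useNum_bound {n m w : ℕ} (C : Fin m → Term n) (α : ℝ)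
    (hα0 : 0 < α) (hα1 : α < 1)
    (hw : ∀ j, termWidth (C j) ≤ w)
    (hm : 0 < m) (hlast : C ⟨m - 1, Nat.sub_lt hm one_pos⟩ = fun _ => none) :
    ∑ ρ : Restriction n, restW α ρ * (useNum C ρ : ℝ) ≤ (4 / (1 - α)) ^ w := by
  classical
  open ExpectedUseNumAux in
  have h1α : (0:ℝ) < 1 - α := by linarith
  set β : ℝ := (1 + α) / (1 - α) with hβdef
  have hβ0 : 0 ≤ β := by positivity
  -- rewrite useNum as a sum of indicators
  have h1 : ∀ ρ : Restriction n, (useNum C ρ : ℝ)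
      = ∑ i : Fin m, (if Useful C ρ i then (1:ℝ) else 0) := by
    intro ρ
    rw [useNum, Finset.card_filter]
    push_cast
    rfl
  have h2 : (∑ ρ : Restriction n, restW α ρ * (useNum C ρ : ℝ))
      = ∑ i : Fin m, ∑ ρ : Restriction n, restW α ρ * (if Useful C ρ i then 1 else 0) := by
    rw [Finset.sum_comm]
    exact Finset.sum_congr rfl fun ρ _ => by rw [h1 ρ, Finset.mul_sum]
  rw [h2]
  have h3 : (∑ i : Fin m, ∑ ρ : Restriction n,
        restW α ρ * (if Useful C ρ i then (1:ℝ) else 0))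
      ≤ ∑ i : Fin m, β ^ w * (PP C α i.val - PP C α (i.val + 1)) :=
    Finset.sum_le_sum fun i _ => key_bound C α hα0 hα1 hw hm hlast i
  refine le_trans h3 ?_
  rw [← Finset.mul_sum]
  have h4 : (∑ i : Fin m, (PP C α i.val - PP C α (i.val + 1)))
      = PP C α 0 - PP C α m := by
    rw [Fin.sum_univ_eq_sum_range (fun j => PP C α j - PP C α (j + 1)) m]
    exact Finset.sum_range_sub' (fun j => PP C α j) m
  rw [h4]
  -- PP C α 0 ≤ 1 and PP C α m ≥ 0
  have hsum1 : (∑ ρ : Restriction n, restW α ρ) = 1 := by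
    have h := Finset.prod_univ_sum (fun _ : Fin n => (Finset.univ : Finset (Option Bool)))
        (fun _ a => if a = none then α else (1 - α) / 2)
    rw [Fintype.piFinset_univ] at h
    have h2 : (∑ ρ : Restriction n, restW α ρ)
        = ∏ v : Fin n, ∑ a : Option Bool, (if a = none then α else (1 - α) / 2) := by
      rw [h]
      exact Finset.sum_congr rfl fun ρ _ => rfl
    rw [h2]
    have hv : ∀ v : Fin n, (∑ a : Option Bool, (if a = none then α else (1 - α) / 2)) = 1 := by
      intro v
      rw [Fintype.sum_option, Fintype.sum_bool]
      have e0 : (if (none : Option Bool) = none then α else (1 - α) / 2) = α := by simp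
      have e1 : (if (some true : Option Bool) = none then α else (1 - α) / 2) = (1 - α) / 2 := by
        simp
      have e2 : (if (some false : Option Bool) = none then α else (1 - α) / 2) = (1 - α) / 2 := by
        simp
      rw [e0, e1, e2]
      ring
    rw [Finset.prod_congr rfl fun v _ => hv v, Finset.prod_const_one]
  have hPP0 : PP C α 0 ≤ 1 := by
    rw [← hsum1, PP]
    refine Finset.sum_le_sum fun ρ _ => ?_
    have := restW_nonneg hα0 hα1 (n := n) ρ
    split <;> nlinarith
  have hPPm : 0 ≤ PP C α m := by
    rw [PP]
    refine Finset.sum_nonneg fun ρ _ => ?_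
    have := restW_nonneg hα0 hα1 (n := n) ρ
    split <;> nlinarith
  have h5 : β ^ w * (PP C α 0 - PP C α m) ≤ β ^ w * 1 := by
    refine mul_le_mul_of_nonneg_left (by linarith) (by positivity)
  refine le_trans h5 ?_
  rw [mul_one]
  refine pow_le_pow_left₀ hβ0 ?_ w
  rw [hβdef, div_le_div_iff₀ h1α h1α]
  nlinarith
end
end

section
/- There is an injection from the set U = {(ρ, s) : ρ ∈ R(n, αn), 1 ≤ s ≤ useNum(L↾ρ)} into the set V = {(ρ', a) : ρ' ∈ ∪_{k=0}^{w} R(n, αn - k), a ∈ {Old, New}^w}, where L is any width-w decision list on n variables and R(n,k) denotes restrictions in {0,1,*}^n with exactly k stars. In particular |U| ≤ |V|. -/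
open Finset
open scoped Classical BigOperators

noncomputable section

/-!
Encode `(ρ, s)` by first replacing `s` with the `s`-th useful index `j`, then fixing the free
variables of `C j` so that `C j` becomes satisfied, and recording in `a` which variables of `C j`
were stars of `ρ`. Every completion `x` of `ρ` hitting `j` is still a completion of the new
restriction `ρ'`, so no term before `C j` can have all its literals fixed in `ρ'`: `j` is the first
index whose term is fixed by `ρ'`. Knowing `j`, the record `a` undoes the fixing and returns `ρ`.
-/

theorem exists_injective_nth_of_le_card {α β : Type*} [Fintype β] [LinearOrder β]
    (P : α → Prop) (Q : α → β → Prop) [∀ a, DecidablePred (Q a)] :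
    ∃ f : {p : α × ℕ // P p.1 ∧ 1 ≤ p.2 ∧ p.2 ≤ (univ.filter (Q p.1)).card} →
          {q : α × β // P q.1 ∧ Q q.1 q.2},
      Function.Injective f := by
  refine ⟨fun p => ⟨(p.1.1, (univ.filter (Q p.1.1)).orderEmbOfFin rfl ⟨p.1.2 - 1, by omega⟩),
    p.2.1, (mem_filter.1 (orderEmbOfFin_mem _ _ _)).2⟩, ?_⟩
  rintro ⟨⟨a, s⟩, _, hs, _⟩ ⟨⟨a', s'⟩, _, hs', _⟩ h
  simp only [Subtype.mk.injEq, Prod.mk.injEq] at h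
  obtain ⟨rfl, h⟩ := h
  have := Fin.mk.inj_iff.1 ((orderEmbOfFin _ rfl).injective h)
  congr
  omega

def codeOn {α : Type*} [LinearOrder α] (s : Finset α) (f : α → Bool) (w : ℕ) : Fin w → Bool :=
  fun l => if h : l.val < s.card then f (s.orderEmbOfFin rfl ⟨l, h⟩) else false

theorem eq_of_codeOn_eq {α : Type*} [LinearOrder α] {s : Finset α} {f g : α → Bool} {w : ℕ}
    (hs : s.card ≤ w) (h : codeOn s f w = codeOn s g w) {v : α} (hv : v ∈ s) : f v = g v := by
  obtain ⟨l, rfl⟩ : v ∈ Set.range (s.orderEmbOfFin rfl) := by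
    rwa [range_orderEmbOfFin]
  simpa [codeOn, l.2] using congrFun h ⟨l, l.2.trans_le hs⟩

section Restrictions

variable {n : ℕ}

def termVars (D : Term n) : Finset (Fin n) :=
  univ.filter fun v => D v ≠ none

/-- `ρ` further fixed so as to satisfy `D`; where `ρ` already fixes a variable it wins. -/
def fixTerm (ρ : Restriction n) (D : Term n) : Restriction n :=
  fun v => (ρ v).or (D v)

def FixesTerm (σ : Restriction n) (D : Term n) : Prop :=
  ∀ v b, D v = some b → σ v = some b

theorem FixesTerm.termSat {σ : Restriction n} {D : Term n} {x : Fin n → Bool}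
    (hD : FixesTerm σ D) (hx : Compatible σ x) : TermSat D x :=
  fun v b hv => hx v b (hD v b hv)

theorem Compatible.fixTerm {ρ : Restriction n} {D : Term n} {x : Fin n → Bool}
    (hx : Compatible ρ x) (hD : TermSat D x) : Compatible (fixTerm ρ D) x := by
  intro v b hv
  cases hρ : ρ v with
  | none => exact hD v b (by simpa [_root_.fixTerm, hρ] using hv)
  | some c => exact hx v b (by simpa [_root_.fixTerm, hρ] using hv)

theorem fixesTerm_fixTerm {ρ : Restriction n} {D : Term n} {x : Fin n → Bool}
    (hx : Compatible ρ x) (hD : TermSat D x) : FixesTerm (fixTerm ρ D) D := by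
  intro v b hv
  cases hρ : ρ v with
  | none => simp [fixTerm, hρ, hv]
  | some c => simp [fixTerm, hρ, ← hx v c hρ, hD v b hv]

theorem eq_of_fixTerm_eq {ρ₁ ρ₂ : Restriction n} {D : Term n}
    (h : fixTerm ρ₁ D = fixTerm ρ₂ D)
    (hstar : ∀ v ∈ termVars D, (ρ₁ v).isNone = (ρ₂ v).isNone) : ρ₁ = ρ₂ := by
  funext v
  have hv := congrFun h v
  by_cases hDv : D v = none
  · simpa [fixTerm, hDv] using hv
  · have := hstar v (by simpa [termVars] using hDv)
    cases h₁ : ρ₁ v <;> cases h₂ : ρ₂ v <;> simp_all [fixTerm]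

theorem stars_fixTerm (ρ : Restriction n) (D : Term n) :
    ∃ t ≤ termWidth D, stars (fixTerm ρ D) = stars ρ - t := by
  have hsplit := card_filter_add_card_filter_not (s := univ.filter fun v => ρ v = none)
    (fun v => D v = none)
  simp only [filter_filter] at hsplit
  have hfix : stars (fixTerm ρ D) = (univ.filter fun v => ρ v = none ∧ D v = none).card := by
    simp [stars, fixTerm]
  refine ⟨(univ.filter fun v => ρ v = none ∧ ¬D v = none).card,
    card_le_card fun v => by simp +contextual, ?_⟩
  change _ = (univ.filter fun v => ρ v = none).card - _
  omega

end Restrictions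

section DecisionLists

variable {n m : ℕ} (C : Fin m → Term n)

theorem DLind_le {x : Fin n → Bool} {i : Fin m} (hi : TermSat (C i) x) : DLind C x ≤ i :=
  Nat.sInf_le ⟨i.2, hi⟩

theorem termSat_of_DLind_eq (hm : 0 < m)
    (hlast : C ⟨m - 1, Nat.sub_lt hm one_pos⟩ = fun _ => none)
    {x : Fin n → Bool} {j : Fin m} (hj : DLind C x = j) : TermSat (C j) x := by
  obtain ⟨hlt, hsat⟩ : DLind C x ∈ {i : ℕ | ∃ h : i < m, TermSat (C ⟨i, h⟩) x} :=
    Nat.sInf_mem ⟨m - 1, Nat.sub_lt hm one_pos, by rw [hlast]; intro _ _ h; cases h⟩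
  rwa [show (⟨DLind C x, hlt⟩ : Fin m) = j from Fin.ext hj] at hsat

def encode (w : ℕ) (ρ : Restriction n) (j : Fin m) : Restriction n × (Fin w → Bool) :=
  (fixTerm ρ (C j), codeOn (termVars (C j)) (fun v => (ρ v).isNone) w)

variable {C} (hm : 0 < m) (hlast : C ⟨m - 1, Nat.sub_lt hm one_pos⟩ = fun _ => none)
include hlast

theorem Useful.fixesTerm_fixTerm {ρ : Restriction n} {j : Fin m} (hj : Useful C ρ j) :
    FixesTerm (fixTerm ρ (C j)) (C j) := by
  obtain ⟨x, hx, hxj⟩ := hj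
  exact _root_.fixesTerm_fixTerm hx (termSat_of_DLind_eq C hm hlast hxj)

theorem Useful.le_of_fixesTerm {ρ : Restriction n} {i j : Fin m} (hj : Useful C ρ j)
    (hi : FixesTerm (fixTerm ρ (C j)) (C i)) : j ≤ i := by
  obtain ⟨x, hx, hxj⟩ := hj
  have := DLind_le C (hi.termSat (hx.fixTerm (termSat_of_DLind_eq C hm hlast hxj)))
  rwa [hxj] at this

theorem eq_of_encode_eq {w : ℕ} (hw : ∀ j, termWidth (C j) ≤ w) {ρ₁ ρ₂ : Restriction n}
    {j₁ j₂ : Fin m} (h₁ : Useful C ρ₁ j₁) (h₂ : Useful C ρ₂ j₂)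
    (h : encode C w ρ₁ j₁ = encode C w ρ₂ j₂) : ρ₁ = ρ₂ ∧ j₁ = j₂ := by
  simp only [encode, Prod.mk.injEq] at h
  obtain ⟨hfix, hcode⟩ := h
  obtain rfl : j₁ = j₂ := le_antisymm
    (h₁.le_of_fixesTerm hm hlast (hfix ▸ h₂.fixesTerm_fixTerm hm hlast))
    (h₂.le_of_fixesTerm hm hlast (hfix ▸ h₁.fixesTerm_fixTerm hm hlast))
  exact ⟨eq_of_fixTerm_eq hfix fun v hv => eq_of_codeOn_eq (hw j₁) hcode hv, rfl⟩

end DecisionLists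

theorem encoding_injection {n m w k : ℕ} (C : Fin m → Term n)
    (hw : ∀ j, termWidth (C j) ≤ w)
    (hm : 0 < m) (hlast : C ⟨m - 1, Nat.sub_lt hm one_pos⟩ = fun _ => none) :
    ∃ f : {p : Restriction n × ℕ // stars p.1 = k ∧ 1 ≤ p.2 ∧ p.2 ≤ useNum C p.1} →
          {q : Restriction n × (Fin w → Bool) // ∃ j ≤ w, stars q.1 = k - j},
      Function.Injective f := by
  obtain ⟨nth, hnth⟩ := exists_injective_nth_of_le_card (fun ρ : Restriction n => stars ρ = k)
    (Useful C)
  let enc : {q : Restriction n × Fin m // stars q.1 = k ∧ Useful C q.1 q.2} →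
      {q : Restriction n × (Fin w → Bool) // ∃ j ≤ w, stars q.1 = k - j} := fun q =>
    ⟨encode C w q.1.1 q.1.2, by
      obtain ⟨t, ht, hstars⟩ := stars_fixTerm q.1.1 (C q.1.2)
      exact ⟨t, ht.trans (hw _), hstars.trans (by rw [q.2.1])⟩⟩
  refine ⟨enc ∘ nth, Function.Injective.comp ?_ hnth⟩
  rintro ⟨⟨ρ₁, j₁⟩, _, h₁⟩ ⟨⟨ρ₂, j₂⟩, _, h₂⟩ h
  obtain ⟨rfl, rfl⟩ := eq_of_encode_eq hm hlast hw h₁ h₂ (congrArg Subtype.val h)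
  rfl
end
end

section
/- Let g : {0,1}^n → {0,1} be not identically zero, let |g| = Pr_x[g(x)=1], and let β ∈ (0,1). Then Stab_β(g) ≥ |g|^2 / Pr_{ρ ~ U(n, 1-β)}[g↾ρ is not identically 0], where Stab_β(g) = Pr_{x uniform, y ~ N_β(x)}[g(x) = g(y) = 1]. -/
open Finset
open scoped Classical BigOperators

noncomputable section

def fOW (o : Option Bool) (a : Bool) : ℝ :=
  match o with | none => 1/2 | some b => if a = b then 1 else 0

def cw {n : ℕ} (ρ : Restriction n) (x : Fin n → Bool) : ℝ := ∏ i, fOW (ρ i) (x i)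

lemma key {n : ℕ} (β : ℝ) (x y : Fin n → Bool) :
    pairW β x y = ∑ ρ : Restriction n, restW (1-β) ρ * (cw ρ x * cw ρ y) := by
  have h1 : ∀ ρ : Restriction n, restW (1-β) ρ * (cw ρ x * cw ρ y) =
      ∏ i : Fin n, ((if ρ i = none then (1-β) else (1-(1-β))/2) * (fOW (ρ i) (x i) * fOW (ρ i) (y i))) := by
    intro ρ
    rw [restW, cw, cw, ← Finset.prod_mul_distrib, ← Finset.prod_mul_distrib]
  simp_rw [h1]
  rw [← Fintype.piFinset_univ, Finset.sum_prod_piFinset Finset.univ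
    (fun (i : Fin n) (o : Option Bool) =>
      (if o = none then (1-β) else (1-(1-β))/2) * (fOW o (x i) * fOW o (y i)))]
  rw [pairW, show ((1:ℝ)/2)^n = ∏ _i : Fin n, ((1:ℝ)/2) by
    rw [Finset.prod_const, Finset.card_fin], ← Finset.prod_mul_distrib]
  apply Finset.prod_congr rfl
  intro i _
  rw [show (Finset.univ : Finset (Option Bool)) = {none, some false, some true} by decide]
  rw [Finset.sum_insert (by decide), Finset.sum_insert (by decide), Finset.sum_singleton]
  cases hx : x i <;> cases hy : y i <;> simp [fOW, noiseW] <;> ring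

lemma marg {n : ℕ} (β : ℝ) (x : Fin n → Bool) :
    ∑ ρ : Restriction n, restW (1-β) ρ * cw ρ x = (1/2 : ℝ) ^ n := by
  have h1 : ∀ ρ : Restriction n, restW (1-β) ρ * cw ρ x =
      ∏ i : Fin n, ((if ρ i = none then (1-β) else (1-(1-β))/2) * fOW (ρ i) (x i)) := by
    intro ρ; rw [restW, cw, ← Finset.prod_mul_distrib]
  simp_rw [h1]
  rw [← Fintype.piFinset_univ, Finset.sum_prod_piFinset Finset.univ
    (fun (i : Fin n) (o : Option Bool) =>
      (if o = none then (1-β) else (1-(1-β))/2) * fOW o (x i)),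
    show ((1:ℝ)/2)^n = ∏ _i : Fin n, ((1:ℝ)/2) by rw [Finset.prod_const, Finset.card_fin]]
  apply Finset.prod_congr rfl
  intro i _
  rw [show (Finset.univ : Finset (Option Bool)) = {none, some false, some true} by decide]
  rw [Finset.sum_insert (by decide), Finset.sum_insert (by decide), Finset.sum_singleton]
  cases hx : x i <;> simp [fOW] <;> ring

lemma restW_nonneg {n : ℕ} {β : ℝ} (hβ0 : 0 < β) (hβ1 : β < 1) (ρ : Restriction n) :
    0 ≤ restW (1-β) ρ := by
  apply Finset.prod_nonneg
  intro i _
  split <;> nlinarith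

lemma cw_nonneg {n : ℕ} (ρ : Restriction n) (x : Fin n → Bool) : 0 ≤ cw ρ x := by
  apply Finset.prod_nonneg
  intro i _
  rcases hoi : ρ i with _ | b <;> simp [fOW] <;> split <;> norm_num

lemma cw_eq_zero {n : ℕ} {ρ : Restriction n} {x : Fin n → Bool}
    (h : ¬ Compatible ρ x) : cw ρ x = 0 := by
  simp only [Compatible, not_forall] at h
  obtain ⟨i, b, hb, hx⟩ := h
  apply Finset.prod_eq_zero (Finset.mem_univ i)
  simp [fOW, hb, hx]

lemma aux_a_eq_zero {n : ℕ} (g : (Fin n → Bool) → Bool) (ρ : Restriction n)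
    (hρ : ¬ ∃ x, Compatible ρ x ∧ g x = true) :
    ∑ x, cw ρ x * (if g x = true then (1:ℝ) else 0) = 0 := by
  apply Finset.sum_eq_zero
  intro x _
  by_cases hc : Compatible ρ x
  · by_cases hgx : g x = true
    · exact absurd ⟨x, hc, hgx⟩ hρ
    · simp [hgx]
  · simp [cw_eq_zero hc]

lemma stab_eq {n : ℕ} (g : (Fin n → Bool) → Bool) (β : ℝ) :
    stab β g = ∑ ρ : Restriction n, restW (1-β) ρ *
      (∑ x, cw ρ x * (if g x = true then (1:ℝ) else 0))^2 := by
  rw [stab]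
  have h : ∀ x y : Fin n → Bool, pairW β x y * (if g x = true ∧ g y = true then (1:ℝ) else 0)
      = ∑ ρ : Restriction n, restW (1-β) ρ * ((cw ρ x * (if g x = true then 1 else 0)) *
          (cw ρ y * (if g y = true then 1 else 0))) := by
    intro x y
    rw [key β x y, Finset.sum_mul]
    apply Finset.sum_congr rfl
    intro ρ _
    by_cases hx : g x = true <;> by_cases hy : g y = true <;> simp [hx, hy] <;> ring
  simp_rw [h]
  have h2 : ∀ x : Fin n → Bool, (∑ y : Fin n → Bool, ∑ ρ : Restriction n,
      restW (1-β) ρ * ((cw ρ x * (if g x = true then (1:ℝ) else 0)) *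
        (cw ρ y * (if g y = true then 1 else 0)))) = ∑ ρ : Restriction n, ∑ y : Fin n → Bool,
      restW (1-β) ρ * ((cw ρ x * (if g x = true then (1:ℝ) else 0)) *
        (cw ρ y * (if g y = true then 1 else 0))) := fun x => Finset.sum_comm
  simp_rw [h2]
  rw [Finset.sum_comm]
  apply Finset.sum_congr rfl
  intro ρ _
  rw [sq]
  simp only [Finset.mul_sum, Finset.sum_mul]
  apply Finset.sum_congr rfl
  intro x _
  apply Finset.sum_congr rfl
  intro y _
  ring

lemma pr_eq {n : ℕ} (g : (Fin n → Bool) → Bool) (β : ℝ) :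
    (pr n fun x => g x = true) = ∑ ρ : Restriction n, restW (1-β) ρ *
      (∑ x, cw ρ x * (if g x = true then (1:ℝ) else 0)) := by
  have h : ∑ ρ : Restriction n, restW (1-β) ρ *
      (∑ x, cw ρ x * (if g x = true then (1:ℝ) else 0)) = ∑ x : Fin n → Bool,
      (if g x = true then (1:ℝ) else 0) * ((1:ℝ)/2)^n := by
    simp_rw [Finset.mul_sum]
    rw [Finset.sum_comm]
    apply Finset.sum_congr rfl
    intro x _
    rw [← marg (n := n) β x, Finset.mul_sum]
    apply Finset.sum_congr rfl
    intro ρ _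
    ring
  rw [h, ← Finset.sum_mul, Finset.sum_boole, pr, div_eq_mul_inv, one_div, inv_pow]
  norm_num
  congr!

lemma D_pos {n : ℕ} (g : (Fin n → Bool) → Bool) (hg : ∃ x, g x = true)
    {β : ℝ} (hβ0 : 0 < β) (hβ1 : β < 1) :
    0 < ∑ ρ : Restriction n, restW (1-β) ρ *
      (if ∃ x, Compatible ρ x ∧ g x = true then (1:ℝ) else 0) := by
  obtain ⟨x0, hx0⟩ := hg
  have h1 : ∀ ρ ∈ (Finset.univ : Finset (Restriction n)), (0:ℝ) ≤ restW (1-β) ρ *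
      (if ∃ x, Compatible ρ x ∧ g x = true then (1:ℝ) else 0) := by
    intro ρ _
    apply mul_nonneg (restW_nonneg hβ0 hβ1 ρ)
    split <;> norm_num
  have h2 : (0:ℝ) < restW (1-β) (fun _ : Fin n => none) *
      (if ∃ x, Compatible (fun _ : Fin n => none) x ∧ g x = true then (1:ℝ) else 0) := by
    have hcomp : Compatible (fun _ : Fin n => none) x0 := fun i b hb => nomatch hb
    rw [if_pos ⟨x0, hcomp, hx0⟩, mul_one, restW]
    apply Finset.prod_pos
    intro i _
    have h1β : (0:ℝ) < 1 - β := by linarith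
    simpa using h1β
  calc (0:ℝ) < _ := h2
    _ ≤ _ := Finset.single_le_sum h1 (Finset.mem_univ _)

theorem stab_lower_bound {n : ℕ} (g : (Fin n → Bool) → Bool) (hg : ∃ x, g x = true)
    (β : ℝ) (hβ0 : 0 < β) (hβ1 : β < 1) :
    (pr n fun x => g x = true) ^ 2 /
      (∑ ρ : Restriction n, restW (1 - β) ρ *
        (if ∃ x, Compatible ρ x ∧ g x = true then 1 else 0)) ≤
      stab β g := by
  set w : Restriction n → ℝ := fun ρ => restW (1-β) ρ with hw
  set a : Restriction n → ℝ := fun ρ => ∑ x, cw ρ x * (if g x = true then 1 else 0) with ha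
  set e : Restriction n → ℝ := fun ρ => if ∃ x, Compatible ρ x ∧ g x = true then 1 else 0 with he
  have hwnn : ∀ ρ, 0 ≤ w ρ := fun ρ => restW_nonneg hβ0 hβ1 ρ
  have henn : ∀ ρ, 0 ≤ e ρ := by
    intro ρ; simp only [he]; split <;> norm_num
  have hD : 0 < ∑ ρ, w ρ * e ρ := D_pos g hg hβ0 hβ1
  rw [div_le_iff₀ hD, pr_eq g β, stab_eq g β]
  have hcs := Finset.sum_mul_sq_le_sq_mul_sq Finset.univ
    (fun ρ : Restriction n => Real.sqrt (w ρ * e ρ)) (fun ρ => Real.sqrt (w ρ) * a ρ)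
  have hfg : ∀ ρ : Restriction n,
      Real.sqrt (w ρ * e ρ) * (Real.sqrt (w ρ) * a ρ) = w ρ * a ρ := by
    intro ρ
    by_cases hρ : ∃ x, Compatible ρ x ∧ g x = true
    · have h1 : e ρ = 1 := by simp only [he]; exact if_pos hρ
      rw [h1, mul_one, ← mul_assoc, Real.mul_self_sqrt (hwnn ρ)]
    · have he0 : e ρ = 0 := by simp only [he]; exact if_neg hρ
      have ha0 : a ρ = 0 := aux_a_eq_zero g ρ hρ
      rw [ha0]
      simp
  have hf2 : ∀ ρ : Restriction n, Real.sqrt (w ρ * e ρ) ^ 2 = w ρ * e ρ :=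
    fun ρ => Real.sq_sqrt (mul_nonneg (hwnn ρ) (henn ρ))
  have hg2 : ∀ ρ : Restriction n, (Real.sqrt (w ρ) * a ρ) ^ 2 = w ρ * (a ρ)^2 := by
    intro ρ
    rw [mul_pow, Real.sq_sqrt (hwnn ρ)]
  simp_rw [hfg, hf2, hg2] at hcs
  calc (∑ ρ, w ρ * a ρ)^2 ≤ (∑ ρ, w ρ * e ρ) * ∑ ρ, w ρ * (a ρ)^2 := hcs
    _ = (∑ ρ, w ρ * (a ρ)^2) * ∑ ρ, w ρ * e ρ := mul_comm _ _
end
end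

section
/- Let L be a width-w decision list of size m on n variables. For any index i ∈ [m] and β ∈ (0,1): p_L(i)^2 / q_L(1-β, i) ≤ Stab_L(β, i) ≤ p_L(i)^{2/(1+β)}, where Stab_L(β, i) = Pr_{x uniform, y ~ N_β(x)}[IndL(x) = IndL(y) = i], assuming q_L(1-β, i) > 0. -/
open Finset
open scoped Classical BigOperators

noncomputable section

/-!
Let `f` be the indicator of `{x | IndL x = i}`, so that `Stab_L(β, i) = ⟨f, T_β f⟩`
(`noiseForm`).

Lower bound: a `β`-correlated pair `(x, y)` is obtained by drawing `ρ ~ U(n, 1 - β)` and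
completing its stars twice, independently and uniformly. Hence, writing `E[f | ρ]` for the mean
of `f` over the completions of `ρ` (`restMean`), `Stab_L(β, i) = E_ρ[E[f | ρ]²]` and
`p_L(i) = E_ρ[E[f | ρ]]`; as `E[f | ρ]` vanishes unless `i` is useful in `L↾ρ`, Cauchy–Schwarz
gives `p_L(i)² ≤ q_L(1 - β, i) · Stab_L(β, i)`.

Upper bound: hypercontractivity `⟨f, T_β g⟩ ≤ ‖f‖_{1+β} ‖g‖_{1+β}` for nonnegative `f, g`
(`cubeNorm`), which tensorizes from the two-point Bonami inequality, and
`‖f‖_{1+β} = p_L(i)^{1/(1+β)}`.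
-/

theorem two_mul_mul_le_one_add_rpow_sub_one_sub_rpow {p t : ℝ} (hp0 : 0 ≤ p) (hp1 : p ≤ 1)
    (ht0 : 0 ≤ t) (ht1 : t ≤ 1) : 2 * p * t ≤ (1 + t) ^ p - (1 - t) ^ p := by
  let k : ℝ → ℝ := fun s => (1 + s) ^ p - (1 - s) ^ p - 2 * p * s
  have hk : MonotoneOn k (Set.Icc 0 1) := by
    refine monotoneOn_of_hasDerivWithinAt_nonneg (convex_Icc 0 1)
      (f' := fun s => 1 * p * (1 + s) ^ (p - 1) - -1 * p * (1 - s) ^ (p - 1) - 2 * p)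
      (Continuous.continuousOn ?_) (fun s hs => ?_) (fun s hs => ?_)
    · exact ((continuous_const.add continuous_id).rpow_const fun _ => Or.inr hp0).sub
        ((continuous_const.sub continuous_id).rpow_const fun _ => Or.inr hp0) |>.sub
        (continuous_const.mul continuous_id)
    · rw [interior_Icc] at hs
      exact ((((hasDerivAt_id s).const_add 1).rpow_const (Or.inl (by simp; linarith [hs.1]))).sub
        (((hasDerivAt_id s).const_sub 1).rpow_const (Or.inl (by simp; linarith [hs.2]))) |>.sub
        ((hasDerivAt_id s).const_mul (2 * p)) |>.congr_deriv (by simp)).hasDerivWithinAt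
    · rw [interior_Icc] at hs
      -- two nonnegative numbers with product at least `1` have sum at least `2`
      have hprod : 1 ≤ (1 + s) ^ (p - 1) * (1 - s) ^ (p - 1) := by
        rw [← Real.mul_rpow (by linarith [hs.1]) (by linarith [hs.2])]
        exact Real.one_le_rpow_of_pos_of_le_one_of_nonpos (by nlinarith [hs.1, hs.2])
          (by nlinarith [hs.1]) (by linarith)
      have := Real.rpow_nonneg (by linarith [hs.1] : (0 : ℝ) ≤ 1 + s) (p - 1)
      have := Real.rpow_nonneg (by linarith [hs.2] : (0 : ℝ) ≤ 1 - s) (p - 1)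
      nlinarith [sq_nonneg ((1 + s) ^ (p - 1) - (1 - s) ^ (p - 1))]
  have := hk ⟨le_rfl, zero_le_one⟩ ⟨ht0, ht1⟩ ht0
  simp only [k, add_zero, sub_zero, Real.one_rpow, mul_zero] at this
  linarith

theorem one_add_mul_sq_le_rpow_add_rpow_div_two {q t : ℝ} (hq1 : 1 ≤ q) (hq2 : q ≤ 2)
    (ht0 : 0 ≤ t) (ht1 : t ≤ 1) :
    1 + q * (q - 1) / 2 * t ^ 2 ≤ ((1 + t) ^ q + (1 - t) ^ q) / 2 := by
  let k : ℝ → ℝ := fun s => ((1 + s) ^ q + (1 - s) ^ q) / 2 - q * (q - 1) / 2 * s ^ 2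
  have hk : MonotoneOn k (Set.Icc 0 1) := by
    refine monotoneOn_of_hasDerivWithinAt_nonneg (convex_Icc 0 1)
      (f' := fun s => (1 * q * (1 + s) ^ (q - 1) + -1 * q * (1 - s) ^ (q - 1)) / 2
        - q * (q - 1) / 2 * (↑2 * s ^ (2 - 1)))
      (Continuous.continuousOn ?_) (fun s hs => ?_) (fun s hs => ?_)
    · have hq0 : 0 ≤ q := by linarith
      exact (((continuous_const.add continuous_id).rpow_const fun _ => Or.inr hq0).add
        ((continuous_const.sub continuous_id).rpow_const fun _ => Or.inr hq0)).div_const 2 |>.sub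
        (continuous_const.mul (continuous_pow 2))
    · rw [interior_Icc] at hs
      exact ((((hasDerivAt_id s).const_add 1).rpow_const (Or.inl (by simp; linarith [hs.1]))).add
        (((hasDerivAt_id s).const_sub 1).rpow_const (Or.inl (by simp; linarith [hs.2])))
        |>.div_const 2 |>.sub ((hasDerivAt_pow 2 s).const_mul _)).hasDerivWithinAt
    · rw [interior_Icc] at hs
      have := two_mul_mul_le_one_add_rpow_sub_one_sub_rpow (p := q - 1) (by linarith)
        (by linarith) hs.1.le hs.2.le
      nlinarith
  have := hk ⟨le_rfl, zero_le_one⟩ ⟨ht0, ht1⟩ ht0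
  simp only [k, add_zero, sub_zero, Real.one_rpow] at this
  norm_num at this
  linarith

theorem one_add_mul_sq_rpow_le {β t : ℝ} (hβ0 : 0 ≤ β) (hβ1 : β ≤ 1) (ht0 : 0 ≤ t) (ht1 : t ≤ 1) :
    (1 + β * t ^ 2) ^ ((1 + β) / 2) ≤ ((1 + t) ^ (1 + β) + (1 - t) ^ (1 + β)) / 2 :=
  calc (1 + β * t ^ 2) ^ ((1 + β) / 2)
      ≤ 1 + (1 + β) / 2 * (β * t ^ 2) :=
        rpow_one_add_le_one_add_mul_self (by nlinarith) (by linarith) (by linarith)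
    _ = 1 + (1 + β) * (1 + β - 1) / 2 * t ^ 2 := by ring
    _ ≤ _ := one_add_mul_sq_le_rpow_add_rpow_div_two (by linarith) (by linarith) ht0 ht1

theorem bonami_two_point_of_le {β a b : ℝ} (hβ0 : 0 ≤ β) (hβ1 : β ≤ 1) (hb : 0 ≤ b)
    (hba : b ≤ a) :
    ((a + b) / 2) ^ 2 + β * ((a - b) / 2) ^ 2 ≤
      ((a ^ (1 + β) + b ^ (1 + β)) / 2) ^ (2 / (1 + β)) := by
  have hq : 0 < 1 + β := by positivity
  rcases (add_nonneg (hb.trans hba) hb).eq_or_lt with hab | hab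
  · obtain ⟨rfl, rfl⟩ : a = 0 ∧ b = 0 := ⟨by linarith, by linarith⟩
    simp [Real.zero_rpow hq.ne', Real.zero_rpow (div_pos two_pos hq).ne']
  obtain ⟨s, t, hs, ht0, ht1, rfl, rfl⟩ :
      ∃ s t, 0 < s ∧ 0 ≤ t ∧ t ≤ 1 ∧ a = s * (1 + t) ∧ b = s * (1 - t) := by
    refine ⟨(a + b) / 2, (a - b) / (a + b), by positivity, div_nonneg (by linarith) hab.le,
      (div_le_one hab).2 (by linarith), ?_, ?_⟩ <;> field_simp <;> ring
  have hlhs : ((s * (1 + t) + s * (1 - t)) / 2) ^ 2 + β * ((s * (1 + t) - s * (1 - t)) / 2) ^ 2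
      = ((s ^ (1 + β)) ^ (2 / (1 + β))) * ((1 + β * t ^ 2) ^ ((1 + β) / 2)) ^ (2 / (1 + β)) := by
    rw [← Real.rpow_mul hs.le, ← Real.rpow_mul (by positivity), mul_div_cancel₀ _ hq.ne',
      show (1 + β) / 2 * (2 / (1 + β)) = 1 by field_simp, Real.rpow_one, Real.rpow_two]
    ring
  rw [hlhs, ← Real.mul_rpow (by positivity) (by positivity)]
  refine Real.rpow_le_rpow (by positivity) ?_ (by positivity)
  calc s ^ (1 + β) * (1 + β * t ^ 2) ^ ((1 + β) / 2)
      ≤ s ^ (1 + β) * (((1 + t) ^ (1 + β) + (1 - t) ^ (1 + β)) / 2) :=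
        mul_le_mul_of_nonneg_left (one_add_mul_sq_rpow_le hβ0 hβ1 ht0 ht1) (by positivity)
    _ = _ := by
        rw [Real.mul_rpow hs.le (by linarith), Real.mul_rpow hs.le (by linarith)]
        ring

theorem bonami_two_point {β a b : ℝ} (hβ0 : 0 ≤ β) (hβ1 : β ≤ 1) (ha : 0 ≤ a) (hb : 0 ≤ b) :
    ((a + b) / 2) ^ 2 + β * ((a - b) / 2) ^ 2 ≤
      ((a ^ (1 + β) + b ^ (1 + β)) / 2) ^ (2 / (1 + β)) := by
  rcases le_total b a with hba | hab
  · exact bonami_two_point_of_le hβ0 hβ1 hb hba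
  · have := bonami_two_point_of_le hβ0 hβ1 ha hab
    rwa [add_comm b, add_comm (b ^ _), ← neg_sub a b, neg_div, neg_sq] at this

theorem noiseW_nonneg {β : ℝ} (hβ0 : -1 ≤ β) (hβ1 : β ≤ 1) (a b : Bool) : 0 ≤ noiseW β a b := by
  unfold noiseW; split <;> linarith

theorem sum_noiseW_mul_le {β : ℝ} (hβ0 : 0 ≤ β) (hβ1 : β ≤ 1) {a c : Bool → ℝ}
    (ha : ∀ b, 0 ≤ a b) (hc : ∀ b, 0 ≤ c b) :
    ∑ b, ∑ b', 1 / 2 * noiseW β b b' * (a b * c b') ≤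
      ((∑ b, a b ^ (1 + β)) / 2) ^ (1 / (1 + β)) *
        ((∑ b, c b ^ (1 + β)) / 2) ^ (1 / (1 + β)) := by
  simp only [Fintype.sum_bool, noiseW, if_true, Bool.true_eq_false, Bool.false_eq_true, if_false]
  set a₀ := a true; set a₁ := a false; set c₀ := c true; set c₁ := c false
  have hA := bonami_two_point hβ0 hβ1 (ha true) (ha false)
  have hC := bonami_two_point hβ0 hβ1 (hc true) (hc false)
  set A := (a₀ ^ (1 + β) + a₁ ^ (1 + β)) / 2
  set C := (c₀ ^ (1 + β) + c₁ ^ (1 + β)) / 2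
  have hA0 : 0 ≤ A := by have := ha true; have := ha false; positivity
  have hC0 : 0 ≤ C := by have := hc true; have := hc false; positivity
  have hsq : ∀ X : ℝ, 0 ≤ X → (X ^ (1 / (1 + β))) ^ 2 = X ^ (2 / (1 + β)) := fun X hX => by
    rw [← Real.rpow_natCast, ← Real.rpow_mul hX]; ring_nf
  -- the left side is a positive semidefinite bilinear form in `a` and `c`, whose diagonal is the
  -- left side of `bonami_two_point`
  have hCS : (1 / 2 * ((1 + β) / 2) * (a₀ * c₀) + 1 / 2 * ((1 - β) / 2) * (a₀ * c₁) +
      (1 / 2 * ((1 - β) / 2) * (a₁ * c₀) + 1 / 2 * ((1 + β) / 2) * (a₁ * c₁))) ^ 2 ≤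
      (((a₀ + a₁) / 2) ^ 2 + β * ((a₀ - a₁) / 2) ^ 2) *
        (((c₀ + c₁) / 2) ^ 2 + β * ((c₀ - c₁) / 2) ^ 2) := by
    nlinarith [mul_nonneg hβ0 (sq_nonneg ((a₀ + a₁) * (c₀ - c₁) - (c₀ + c₁) * (a₀ - a₁)))]
  refine le_of_sq_le_sq ?_ (by positivity)
  rw [mul_pow, hsq A hA0, hsq C hC0]
  exact hCS.trans (mul_le_mul hA hC (by positivity) (by positivity))

section Hypercube

variable {n : ℕ}

def noiseForm (β : ℝ) (f g : (Fin n → Bool) → ℝ) : ℝ :=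
  ∑ x, ∑ y, pairW β x y * (f x * g y)

def cubeMoment (q : ℝ) (f : (Fin n → Bool) → ℝ) : ℝ :=
  ∑ x, (1 / 2) ^ n * f x ^ q

def cubeNorm (q : ℝ) (f : (Fin n → Bool) → ℝ) : ℝ :=
  cubeMoment q f ^ (1 / q)

theorem cubeMoment_nonneg (q : ℝ) {f : (Fin n → Bool) → ℝ} (hf : ∀ x, 0 ≤ f x) :
    0 ≤ cubeMoment q f :=
  sum_nonneg fun x _ => mul_nonneg (by positivity) (Real.rpow_nonneg (hf x) q)

theorem cubeNorm_nonneg (q : ℝ) {f : (Fin n → Bool) → ℝ} (hf : ∀ x, 0 ≤ f x) :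
    0 ≤ cubeNorm q f :=
  Real.rpow_nonneg (cubeMoment_nonneg q hf) _

theorem cubeNorm_rpow {q : ℝ} (hq : q ≠ 0) {f : (Fin n → Bool) → ℝ} (hf : ∀ x, 0 ≤ f x) :
    cubeNorm q f ^ q = cubeMoment q f := by
  rw [cubeNorm, one_div, Real.rpow_inv_rpow (cubeMoment_nonneg q hf) hq]

theorem sum_cube_succ {M : Type*} [AddCommMonoid M] (F : (Fin (n + 1) → Bool) → M) :
    ∑ x, F x = ∑ b, ∑ x, F (Fin.cons b x) := by
  rw [← (Fin.consEquiv fun _ => Bool).sum_comp F, Fintype.sum_prod_type]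
  rfl

theorem pairW_cons (β : ℝ) (b b' : Bool) (x y : Fin n → Bool) :
    pairW β (Fin.cons b x : Fin (n + 1) → Bool) (Fin.cons b' y)
      = 1 / 2 * noiseW β b b' * pairW β x y := by
  simp only [pairW, Fin.prod_univ_succ, Fin.cons_zero, Fin.cons_succ, pow_succ]
  ring

theorem noiseForm_succ (β : ℝ) (f g : (Fin (n + 1) → Bool) → ℝ) :
    noiseForm β f g = ∑ b, ∑ b', 1 / 2 * noiseW β b b' *
      noiseForm β (fun x => f (Fin.cons b x)) (fun y => g (Fin.cons b' y)) := by
  simp only [noiseForm, mul_sum]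
  rw [sum_cube_succ (M := ℝ)]
  refine sum_congr rfl fun b _ => ?_
  refine ((sum_congr rfl fun x _ => sum_cube_succ _).trans sum_comm).trans
    (sum_congr rfl fun b' _ => sum_congr rfl fun x _ => sum_congr rfl fun y _ => ?_)
  rw [pairW_cons]
  ring

theorem cubeMoment_succ (q : ℝ) (f : (Fin (n + 1) → Bool) → ℝ) :
    cubeMoment q f = (∑ b, cubeMoment q fun x => f (Fin.cons b x)) / 2 := by
  rw [cubeMoment, sum_cube_succ (M := ℝ)]
  simp only [cubeMoment, sum_div, pow_succ]
  exact sum_congr rfl fun b _ => sum_congr rfl fun x _ => by ring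

theorem noiseForm_le_cubeNorm_mul_cubeNorm {β : ℝ} (hβ0 : 0 ≤ β) (hβ1 : β ≤ 1)
    {f g : (Fin n → Bool) → ℝ} (hf : ∀ x, 0 ≤ f x) (hg : ∀ x, 0 ≤ g x) :
    noiseForm β f g ≤ cubeNorm (1 + β) f * cubeNorm (1 + β) g := by
  have hq : 1 + β ≠ 0 := by positivity
  induction n with
  | zero =>
    simp only [noiseForm, cubeNorm, cubeMoment, pairW, Fintype.sum_unique, pow_zero, one_mul,
      univ_eq_empty, prod_empty]
    rw [one_div, Real.rpow_rpow_inv (hf _) hq, Real.rpow_rpow_inv (hg _) hq]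
  | succ n ih =>
    calc noiseForm β f g
        ≤ ∑ b, ∑ b', 1 / 2 * noiseW β b b' *
            (cubeNorm (1 + β) (fun x => f (Fin.cons b x)) *
              cubeNorm (1 + β) (fun y => g (Fin.cons b' y))) := by
          rw [noiseForm_succ]
          exact sum_le_sum fun b _ => sum_le_sum fun b' _ => mul_le_mul_of_nonneg_left
            (ih (fun x => hf _) (fun y => hg _))
            (mul_nonneg (by norm_num) (noiseW_nonneg (by linarith) hβ1 b b'))
      _ ≤ _ := sum_noiseW_mul_le hβ0 hβ1 (fun b => cubeNorm_nonneg _ fun x => hf _)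
            (fun b => cubeNorm_nonneg _ fun x => hg _)
      _ = _ := by
          have hfb : ∀ b, cubeNorm (1 + β) (fun x => f (Fin.cons b x)) ^ (1 + β) =
              cubeMoment (1 + β) fun x => f (Fin.cons b x) := fun b => cubeNorm_rpow hq fun x => hf _
          have hgb : ∀ b, cubeNorm (1 + β) (fun y => g (Fin.cons b y)) ^ (1 + β) =
              cubeMoment (1 + β) fun y => g (Fin.cons b y) := fun b => cubeNorm_rpow hq fun y => hg _
          simp only [hfb, hgb, ← cubeMoment_succ]
          rfl

end Hypercube

section Restrictions

variable {n : ℕ}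

def bitCompW (o : Option Bool) (b : Bool) : ℝ :=
  o.elim (1 / 2) fun c => if b = c then 1 else 0

theorem compW_eq_prod (ρ : Restriction n) (x : Fin n → Bool) :
    compW ρ x = ∏ i, bitCompW (ρ i) (x i) := by
  by_cases h : Compatible ρ x
  · rw [compW, if_pos h, stars, ← prod_filter_mul_prod_filter_not univ fun i => ρ i = none]
    have hstar : ∀ i ∈ univ.filter fun i => ρ i = none, bitCompW (ρ i) (x i) = 1 / 2 :=
      fun i hi => by rw [(mem_filter.1 hi).2]; rfl
    have hfixed : ∀ i ∈ univ.filter fun i => ¬ρ i = none, bitCompW (ρ i) (x i) = 1 := fun i hi => by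
      obtain ⟨c, hc⟩ := Option.ne_none_iff_exists'.1 (mem_filter.1 hi).2
      simp [hc, bitCompW, h i c hc]
    rw [prod_congr rfl hstar, prod_congr rfl hfixed, prod_const, prod_const_one, mul_one]
  · rw [compW, if_neg h, eq_comm]
    simp only [Compatible, not_forall, exists_prop] at h
    obtain ⟨j, c, hj, hc⟩ := h
    exact prod_eq_zero (mem_univ j) (by simp [hj, bitCompW, hc])

theorem sum_restW_mul_compW (α : ℝ) (x : Fin n → Bool) :
    ∑ ρ : Restriction n, restW α ρ * compW ρ x = (1 / 2) ^ n := by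
  simp only [restW, compW_eq_prod, ← prod_mul_distrib]
  rw [← Fintype.prod_sum fun i (o : Option Bool) =>
    (if o = none then α else (1 - α) / 2) * bitCompW o (x i)]
  have hbit : ∀ a : Bool,
      ∑ o : Option Bool, (if o = none then α else (1 - α) / 2) * bitCompW o a = 1 / 2 := by
    intro a
    cases a <;> simp [Fintype.sum_option, bitCompW] <;> ring
  simp only [hbit, prod_const, card_univ, Fintype.card_fin]

theorem sum_restW_mul_compW_mul_compW (β : ℝ) (x y : Fin n → Bool) :
    ∑ ρ : Restriction n, restW (1 - β) ρ * (compW ρ x * compW ρ y) = pairW β x y := by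
  simp only [restW, compW_eq_prod, ← prod_mul_distrib]
  rw [← Fintype.prod_sum fun i (o : Option Bool) =>
    (if o = none then 1 - β else (1 - (1 - β)) / 2) * (bitCompW o (x i) * bitCompW o (y i))]
  have hbit : ∀ a b : Bool, ∑ o : Option Bool,
      (if o = none then 1 - β else (1 - (1 - β)) / 2) * (bitCompW o a * bitCompW o b)
        = 1 / 2 * noiseW β a b := by
    intro a b
    cases a <;> cases b <;> simp [Fintype.sum_option, bitCompW, noiseW] <;> ring
  simp only [hbit, prod_mul_distrib, prod_const, card_univ, Fintype.card_fin, pairW]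

theorem restW_nonneg_s9 {α : ℝ} (hα0 : 0 ≤ α) (hα1 : α ≤ 1) (ρ : Restriction n) :
    0 ≤ restW α ρ :=
  prod_nonneg fun i _ => by split <;> linarith

def restMean (ρ : Restriction n) (f : (Fin n → Bool) → ℝ) : ℝ :=
  ∑ x, compW ρ x * f x

theorem sum_mul_eq_sum_restW_mul_restMean (α : ℝ) (f : (Fin n → Bool) → ℝ) :
    ∑ x, (1 / 2) ^ n * f x = ∑ ρ : Restriction n, restW α ρ * restMean ρ f := by
  calc ∑ x, (1 / 2) ^ n * f x = ∑ x, ∑ ρ : Restriction n, restW α ρ * compW ρ x * f x := by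
        simp only [← sum_mul, sum_restW_mul_compW]
    _ = _ := by
        rw [sum_comm]
        simp only [restMean, mul_sum, mul_assoc]

theorem noiseForm_eq_sum_restW (β : ℝ) (f g : (Fin n → Bool) → ℝ) :
    noiseForm β f g = ∑ ρ : Restriction n, restW (1 - β) ρ * (restMean ρ f * restMean ρ g) := by
  calc noiseForm β f g = ∑ x, ∑ y, ∑ ρ : Restriction n,
        restW (1 - β) ρ * ((compW ρ x * f x) * (compW ρ y * g y)) := by
        simp only [noiseForm, ← sum_restW_mul_compW_mul_compW β, sum_mul]
        exact sum_congr rfl fun x _ => sum_congr rfl fun y _ => sum_congr rfl fun ρ _ => by ring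
    _ = _ := by
        rw [sum_congr rfl fun x _ => sum_comm, sum_comm]
        simp only [restMean, sum_mul_sum]
        simp only [mul_sum]

theorem sq_sum_le_sum_restW_mul_noiseForm {β : ℝ} (hβ0 : 0 ≤ β) (hβ1 : β ≤ 1)
    {f : (Fin n → Bool) → ℝ} {P : Restriction n → Prop} (hP : ∀ ρ, ¬P ρ → restMean ρ f = 0) :
    (∑ x, (1 / 2) ^ n * f x) ^ 2 ≤
      (∑ ρ, restW (1 - β) ρ * if P ρ then 1 else 0) * noiseForm β f f := by
  rw [sum_mul_eq_sum_restW_mul_restMean (1 - β), noiseForm_eq_sum_restW]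
  have hW := restW_nonneg_s9 (n := n) (α := 1 - β) (by linarith) (by linarith)
  refine sum_sq_le_sum_mul_sum_of_sq_le_mul _ (fun ρ _ => ?_) (fun ρ _ => ?_) fun ρ _ => ?_
  · split_ifs <;> simp [hW ρ]
  · exact mul_nonneg (hW ρ) (mul_self_nonneg _)
  · by_cases h : P ρ
    · simp only [h, if_true]
      exact le_of_eq (by ring)
    · simp [h, hP ρ h]

end Restrictions

section DecisionList

variable {n m : ℕ}

def hitIndicator (C : Fin m → Term n) (i : ℕ) (x : Fin n → Bool) : ℝ :=
  if DLind C x = i then 1 else 0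

theorem hitIndicator_nonneg (C : Fin m → Term n) (i : ℕ) (x : Fin n → Bool) :
    0 ≤ hitIndicator C i x := by
  unfold hitIndicator; split <;> norm_num

theorem StabInd_eq_noiseForm (C : Fin m → Term n) (β : ℝ) (i : Fin m) :
    StabInd C β i = noiseForm β (hitIndicator C i) (hitIndicator C i) := by
  refine sum_congr rfl fun x _ => sum_congr rfl fun y _ => ?_
  unfold hitIndicator
  split_ifs <;> simp_all

theorem pL_eq_sum_hitIndicator (C : Fin m → Term n) (i : ℕ) :
    pL C i = ∑ x, (1 / 2) ^ n * hitIndicator C i x := by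
  simp only [pL, pr, ← mul_sum, hitIndicator, sum_boole]
  rw [one_div_pow, one_div_mul_eq_div]
  congr

theorem cubeMoment_hitIndicator (C : Fin m → Term n) (i : ℕ) {q : ℝ} (hq : q ≠ 0) :
    cubeMoment q (hitIndicator C i) = pL C i := by
  rw [pL_eq_sum_hitIndicator]
  refine sum_congr rfl fun x _ => ?_
  unfold hitIndicator
  split_ifs <;> simp [Real.zero_rpow hq]

theorem restMean_hitIndicator_eq_zero {C : Fin m → Term n} {ρ : Restriction n} {i : Fin m}
    (h : ¬Useful C ρ i) : restMean ρ (hitIndicator C i) = 0 := by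
  refine sum_eq_zero fun x _ => ?_
  by_cases hx : Compatible ρ x
  · have : DLind C x ≠ i := fun hi => h ⟨x, hx, hi⟩
    simp [hitIndicator, this]
  · simp [compW, hx]

end DecisionList

theorem bridging_lemma_general {n m : ℕ} (C : Fin m → Term n)
    (i : Fin m) (β : ℝ) (hβ0 : 0 < β) (hβ1 : β < 1)
    (hq : 0 < qL C (1 - β) i) :
    pL C i.val ^ 2 / qL C (1 - β) i ≤ StabInd C β i ∧
    StabInd C β i ≤ pL C i.val ^ ((2 : ℝ) / (1 + β)) := by
  rw [StabInd_eq_noiseForm]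
  constructor
  · rw [div_le_iff₀ hq, pL_eq_sum_hitIndicator, mul_comm]
    exact sq_sum_le_sum_restW_mul_noiseForm hβ0.le hβ1.le fun ρ => restMean_hitIndicator_eq_zero
  · calc noiseForm β (hitIndicator C i) (hitIndicator C i)
        ≤ cubeNorm (1 + β) (hitIndicator C i) * cubeNorm (1 + β) (hitIndicator C i) :=
          noiseForm_le_cubeNorm_mul_cubeNorm hβ0.le hβ1.le (hitIndicator_nonneg C i)
            (hitIndicator_nonneg C i)
      _ = pL C i.val ^ ((2 : ℝ) / (1 + β)) := by
          rw [cubeNorm, cubeMoment_hitIndicator C i (by positivity),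
            ← Real.rpow_add' (by unfold pL pr; positivity) (by positivity), ← add_div,
            one_add_one_eq_two]

theorem bridging_lemma {n m w : ℕ} (C : Fin m → Term n)
    (hw : ∀ j, termWidth (C j) ≤ w)
    (hm : 0 < m) (hlast : C ⟨m - 1, Nat.sub_lt hm one_pos⟩ = fun _ => none)
    (i : Fin m) (β : ℝ) (hβ0 : 0 < β) (hβ1 : β < 1)
    (hq : 0 < qL C (1 - β) i) :
    pL C i.val ^ 2 / qL C (1 - β) i ≤ StabInd C β i ∧
    StabInd C β i ≤ pL C i.val ^ ((2 : ℝ) / (1 + β)) :=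
  bridging_lemma_general C i β hβ0 hβ1 hq
end
end

section
/- Every width-w decision list L of size m on n variables can be ε-approximated by a sublist: there exists J ⊆ [m] with m ∈ J and |J| ≤ (2 + (1/w)·log_2(1/ε))^{Cw} for an absolute constant C, such that Pr_{x uniform}[L(x) ≠ L|_J(x)] ≤ ε. Moreover J can be taken to consist of the default rule together with the indices i having the largest hit probabilities p_L(i). -/
open Finset
open scoped Classical BigOperators

noncomputable section

/-! Let `p_i = p_L(i)`. The heart of the proof is the moment bound
`∑ᵢ p_i ^ γ ≤ ((2 - γ) / γ) ^ w` for `0 < γ ≤ 1`. Under a random restriction `ρ ~ U(n, 1 - γ)`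
an event of uniform measure `μ` stays reachable with probability at least `μ ^ γ` (induction on
`n`, using concavity of `t ↦ t ^ γ`), so `p_i ^ γ ≤ q_L(1 - γ, i)`. If rule `i` is useful in
`L↾ρ`, then `ρ` agrees with `C i` up to stars; fixing these at most `w` stars as in `C i` costs a
factor `(2 - γ) / γ` each and leaves a restriction with a completion avoiding the rules before `i`
but none avoiding the first `i + 1` rules. These events are disjoint for different `i`, so
`∑ᵢ q_L(1 - γ, i) ≤ ((2 - γ) / γ) ^ w`.

Keeping the default rule and the rules with `p_i ≥ δ` then keeps at most `M / δ ^ γ + 1` rules,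
while the discarded rules carry total mass at most `M * δ ^ (1 - γ)`, where `M` bounds the moment
sum. The choice `γ = 1 / G`, `δ = (ε / (2G) ^ w) ^ 2` with `G = 2 + log₂(1/ε) / w` makes the
second quantity at most `ε` and the first at most `G ^ (7w)`. -/

namespace DecisionList

lemma sum_pi_fin_succ {β M : Type*} [Fintype β] [AddCommMonoid M] {n : ℕ}
    (f : (Fin (n + 1) → β) → M) :
    ∑ x, f x = ∑ b, ∑ x : Fin n → β, f (Fin.cons b x) := by
  rw [← (Fin.consEquiv fun _ => β).sum_comp, Fintype.sum_prod_type]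
  rfl

section Restrictions

variable {n : ℕ} {α : ℝ}

def coordW (α : ℝ) (o : Option Bool) : ℝ := if o = none then α else (1 - α) / 2

lemma restW_eq_prod_coordW (ρ : Restriction n) : restW α ρ = ∏ i, coordW α (ρ i) := rfl

lemma restW_cons (o : Option Bool) (ρ : Restriction n) :
    restW α (Fin.cons o ρ) = coordW α o * restW α ρ := by
  simp only [restW_eq_prod_coordW, Fin.prod_univ_succ, Fin.cons_zero, Fin.cons_succ]

lemma restW_nonneg (h0 : 0 ≤ α) (h1 : α ≤ 1) (ρ : Restriction n) : 0 ≤ restW α ρ :=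
  prod_nonneg fun i _ => by split <;> linarith

lemma sum_restW : ∑ ρ : Restriction n, restW α ρ = 1 := by
  have h : ∑ o, coordW α o = 1 := by
    simp only [coordW, Fintype.sum_option, Fintype.sum_bool, reduceCtorEq, if_true, if_false]
    ring
  simp only [restW_eq_prod_coordW, ← Fintype.prod_sum, h, prod_const_one]

def restPr (α : ℝ) (P : Restriction n → Prop) : ℝ := ∑ ρ ∈ univ.filter P, restW α ρ

lemma restPr_eq_sum (P : Restriction n → Prop) :
    restPr α P = ∑ ρ, if P ρ then restW α ρ else 0 :=
  sum_filter _ _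

lemma qL_eq_restPr {m : ℕ} (C : Fin m → Term n) (i : Fin m) :
    qL C α i = restPr α fun ρ => Useful C ρ i := by
  simp only [qL, restPr_eq_sum, mul_boole]

lemma restPr_nonneg (h0 : 0 ≤ α) (h1 : α ≤ 1) (P : Restriction n → Prop) : 0 ≤ restPr α P :=
  sum_nonneg fun ρ _ => restW_nonneg h0 h1 ρ

lemma restPr_mono (h0 : 0 ≤ α) (h1 : α ≤ 1) {P Q : Restriction n → Prop} (h : ∀ ρ, P ρ → Q ρ) :
    restPr α P ≤ restPr α Q :=
  sum_le_sum_of_subset_of_nonneg (monotone_filter_right _ fun ρ _ => h ρ) fun ρ _ _ =>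
    restW_nonneg h0 h1 ρ

lemma restPr_le_one (h0 : 0 ≤ α) (h1 : α ≤ 1) (P : Restriction n → Prop) : restPr α P ≤ 1 :=
  (sum_le_sum_of_subset_of_nonneg (filter_subset _ _) fun ρ _ _ => restW_nonneg h0 h1 ρ).trans
    sum_restW.le

lemma restPr_eq_one {P : Restriction n → Prop} (h : ∀ ρ, P ρ) : restPr α P = 1 := by
  simp only [restPr_eq_sum, if_pos (h _), sum_restW]

lemma restPr_or {P Q : Restriction n → Prop} (h : ∀ ρ, P ρ → ¬ Q ρ) :
    restPr α (fun ρ => P ρ ∨ Q ρ) = restPr α P + restPr α Q := by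
  simp only [restPr_eq_sum, ← sum_add_distrib]
  refine sum_congr rfl fun ρ _ => ?_
  by_cases hP : P ρ
  · rw [if_pos (Or.inl hP), if_pos hP, if_neg (h ρ hP), add_zero]
  · by_cases hQ : Q ρ
    · rw [if_pos (Or.inr hQ), if_neg hP, if_pos hQ, zero_add]
    · rw [if_neg (by tauto), if_neg hP, if_neg hQ, add_zero]

lemma restPr_and_not {P Q : Restriction n → Prop} (h : ∀ ρ, Q ρ → P ρ) :
    restPr α (fun ρ => P ρ ∧ ¬ Q ρ) = restPr α P - restPr α Q := by
  have hsplit : restPr α P = restPr α (fun ρ => (P ρ ∧ ¬ Q ρ) ∨ Q ρ) := by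
    congr 1; ext ρ; have := h ρ; tauto
  rw [hsplit, restPr_or fun ρ hρ => hρ.2]
  ring

lemma restPr_cons (P : Restriction (n + 1) → Prop) :
    restPr α P = α * restPr α (fun ρ => P (Fin.cons none ρ))
      + (1 - α) / 2 * (restPr α (fun ρ => P (Fin.cons (some false) ρ))
        + restPr α (fun ρ => P (Fin.cons (some true) ρ))) := by
  simp only [restPr_eq_sum, sum_pi_fin_succ (fun ρ => if P ρ then restW α ρ else 0),
    Fintype.sum_option, Fintype.sum_bool, restW_cons, mul_sum, ← mul_ite_zero, mul_add]
  simp only [coordW, reduceCtorEq, if_true, if_false]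
  ring

lemma restPr_swap (v : Fin n) (a b : Option Bool) {P : Restriction n → Prop}
    (hP : ∀ ρ c, P (Function.update ρ v c) ↔ P ρ) :
    coordW α b * restPr α (fun ρ => ρ v = a ∧ P ρ)
      = coordW α a * restPr α (fun ρ => ρ v = b ∧ P ρ) := by
  have hW : ∀ ρ : Restriction n, ρ v = a →
      coordW α b * restW α ρ = coordW α a * restW α (Function.update ρ v b) := by
    intro ρ hρ
    have hrest : ∏ u ∈ univ.erase v, coordW α (Function.update ρ v b u)
        = ∏ u ∈ univ.erase v, coordW α (ρ u) :=
      prod_congr rfl fun u hu => by rw [Function.update_of_ne (ne_of_mem_erase hu)]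
    rw [restW_eq_prod_coordW, restW_eq_prod_coordW, ← mul_prod_erase univ _ (mem_univ v),
      ← mul_prod_erase univ _ (mem_univ v), Function.update_self, hrest, hρ]
    ring
  rw [restPr, restPr, mul_sum, mul_sum]
  refine sum_nbij' (fun ρ => Function.update ρ v b) (fun ρ => Function.update ρ v a)
    ?_ ?_ ?_ ?_ ?_
  all_goals intro ρ hρ; simp only [mem_filter, mem_univ, true_and] at hρ ⊢
  · exact ⟨Function.update_self v b ρ, (hP ρ b).2 hρ.2⟩
  · exact ⟨Function.update_self v a ρ, (hP ρ a).2 hρ.2⟩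
  · rw [Function.update_idem, ← hρ.1, Function.update_eq_self]
  · rw [Function.update_idem, ← hρ.1, Function.update_eq_self]
  · exact hW ρ hρ.1

end Restrictions

section Uniform

variable {n : ℕ}

lemma pr_nonneg (P : (Fin n → Bool) → Prop) : 0 ≤ pr n P := by
  unfold pr; positivity

lemma pr_le_one (P : (Fin n → Bool) → Prop) : pr n P ≤ 1 := by
  unfold pr
  rw [div_le_one (by positivity)]
  exact_mod_cast (card_filter_le _ _).trans (by simp)

lemma pr_mono {P Q : (Fin n → Bool) → Prop} (h : ∀ x, P x → Q x) : pr n P ≤ pr n Q := by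
  unfold pr
  gcongr
  exact h _

lemma pr_cons (P : (Fin (n + 1) → Bool) → Prop) :
    pr (n + 1) P
      = (pr n (fun x => P (Fin.cons false x)) + pr n (fun x => P (Fin.cons true x))) / 2 := by
  simp only [pr, card_filter, sum_pi_fin_succ (fun x => if P x then 1 else 0), Fintype.sum_bool]
  push_cast
  field_simp
  ring

lemma pr_le_sum_pr {ι : Type*} (s : Finset ι) {P : (Fin n → Bool) → Prop}
    {Q : ι → (Fin n → Bool) → Prop} (h : ∀ x, P x → ∃ i ∈ s, Q i x) :
    pr n P ≤ ∑ i ∈ s, pr n (Q i) := by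
  simp only [pr, ← sum_div]
  gcongr
  have hsub : univ.filter P ⊆ s.biUnion fun i => univ.filter (Q i) := by
    intro x hx
    obtain ⟨i, hi, hQ⟩ := h x (mem_filter.1 hx).2
    exact mem_biUnion.2 ⟨i, hi, mem_filter.2 ⟨mem_univ x, hQ⟩⟩
  exact_mod_cast (card_le_card hsub).trans card_biUnion_le

end Uniform

lemma rpow_midpoint_le {γ a b u : ℝ} (hγ0 : 0 < γ) (hγ1 : γ ≤ 1) (ha : 0 ≤ a) (hb : 0 ≤ b)
    (hau : a ≤ u) (hbu : b ≤ u) :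
    ((a + b) / 2) ^ γ ≤ (1 - γ) * u ^ γ + γ / 2 * a ^ γ + γ / 2 * b ^ γ := by
  rcases (ha.trans hau).eq_or_lt with rfl | hu
  · obtain rfl : a = 0 := le_antisymm hau ha
    obtain rfl : b = 0 := le_antisymm hbu hb
    simp [Real.zero_rpow hγ0.ne']
  -- the tangent line of the concave `t ↦ t ^ γ` at `u`, via weighted AM-GM
  have hdom : ∀ c, 0 ≤ c → c ≤ u → c ≤ c ^ γ * u ^ (1 - γ) := fun c hc hcu =>
    calc c = c ^ γ * c ^ (1 - γ) := by rw [← Real.rpow_add' hc (by norm_num)]; simp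
      _ ≤ c ^ γ * u ^ (1 - γ) := by gcongr
  set s := (a + b) / 2 with hs
  have amgm : s ^ γ * u ^ (1 - γ) ≤ γ * s + (1 - γ) * u :=
    Real.geom_mean_le_arith_mean2_weighted hγ0.le (by linarith) (by positivity) hu.le (by ring)
  rw [← mul_le_mul_iff_of_pos_right (Real.rpow_pos_of_pos hu (1 - γ))]
  have ha' := hdom a ha hau
  have hb' := hdom b hb hbu
  have hu' := hdom u hu.le le_rfl
  calc s ^ γ * u ^ (1 - γ) ≤ γ / 2 * a + γ / 2 * b + (1 - γ) * u := by rw [hs] at amgm; linarith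
    _ ≤ _ := by nlinarith

lemma compatible_cons_iff {n : ℕ} {o : Option Bool} {ρ : Restriction n} {b : Bool}
    {x : Fin n → Bool} :
    Compatible (Fin.cons o ρ) (Fin.cons b x) ↔ (∀ c, o = some c → b = c) ∧ Compatible ρ x := by
  simp only [Compatible, Fin.forall_fin_succ, Fin.cons_zero, Fin.cons_succ]

lemma exists_compatible_cons_none {n : ℕ} (ρ : Restriction n) (F : (Fin (n + 1) → Bool) → Prop) :
    (∃ x, Compatible (Fin.cons none ρ) x ∧ F x)
      ↔ ∃ x, Compatible ρ x ∧ (F (Fin.cons false x) ∨ F (Fin.cons true x)) := by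
  simp only [Fin.exists_fin_succ_pi, compatible_cons_iff, reduceCtorEq, false_imp_iff,
    implies_true, true_and, Bool.exists_bool, and_or_left, exists_or]

lemma exists_compatible_cons_some {n : ℕ} (ρ : Restriction n) (c : Bool)
    (F : (Fin (n + 1) → Bool) → Prop) :
    (∃ x, Compatible (Fin.cons (some c) ρ) x ∧ F x) ↔ ∃ x, Compatible ρ x ∧ F (Fin.cons c x) := by
  simp only [Fin.exists_fin_succ_pi, compatible_cons_iff, Option.some.injEq]
  constructor
  · rintro ⟨b, x, ⟨hb, hx⟩, hF⟩
    obtain rfl := hb c rfl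
    exact ⟨x, hx, hF⟩
  · rintro ⟨x, hx, hF⟩
    exact ⟨c, x, ⟨fun _ => id, hx⟩, hF⟩

theorem pr_rpow_le_restPr_exists_compatible {γ : ℝ} (hγ0 : 0 < γ) (hγ1 : γ ≤ 1) :
    ∀ {n : ℕ} (F : (Fin n → Bool) → Prop),
      pr n F ^ γ ≤ restPr (1 - γ) (fun ρ => ∃ x, Compatible ρ x ∧ F x)
  | 0, F => by
    by_cases hF : ∃ x, F x
    · obtain ⟨x, hx⟩ := hF
      rw [restPr_eq_one fun ρ => ⟨x, fun i => i.elim0, hx⟩]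
      exact Real.rpow_le_one (pr_nonneg F) (pr_le_one F) hγ0.le
    · have hpr : pr 0 F = 0 := by simp [pr, filter_false_of_mem fun x _ => not_exists.1 hF x]
      rw [hpr, Real.zero_rpow hγ0.ne']
      exact restPr_nonneg (by linarith) (by linarith) _
  | n + 1, F => by
    set F₀ : (Fin n → Bool) → Prop := fun x => F (Fin.cons false x)
    set F₁ : (Fin n → Bool) → Prop := fun x => F (Fin.cons true x)
    have hreach := restPr_cons (α := 1 - γ) (fun ρ => ∃ x, Compatible ρ x ∧ F x)
    simp only [exists_compatible_cons_none, exists_compatible_cons_some] at hreach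
    rw [pr_cons, hreach]
    calc ((pr n F₀ + pr n F₁) / 2) ^ γ
        ≤ (1 - γ) * pr n (fun x => F₀ x ∨ F₁ x) ^ γ + γ / 2 * pr n F₀ ^ γ
          + γ / 2 * pr n F₁ ^ γ :=
          rpow_midpoint_le hγ0 hγ1 (pr_nonneg _) (pr_nonneg _)
            (pr_mono fun _ => Or.inl) (pr_mono fun _ => Or.inr)
      _ ≤ _ := by
          have h₀₁ := pr_rpow_le_restPr_exists_compatible hγ0 hγ1 fun x => F₀ x ∨ F₁ x
          have h₀ := pr_rpow_le_restPr_exists_compatible hγ0 hγ1 F₀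
          have h₁ := pr_rpow_le_restPr_exists_compatible hγ0 hγ1 F₁
          rw [show (1 - (1 - γ)) / 2 = γ / 2 by ring]
          nlinarith

section IndexFunction

variable {n m : ℕ} {C : Fin m → Term n} {x : Fin n → Bool}

lemma DLind_eq_iff (hx : ∃ j, TermSat (C j) x) (i : Fin m) :
    DLind C x = i ↔ TermSat (C i) x ∧ ∀ j : Fin m, j < i → ¬ TermSat (C j) x := by
  have hne : {k : ℕ | ∃ h : k < m, TermSat (C ⟨k, h⟩) x}.Nonempty :=
    let ⟨j, hj⟩ := hx; ⟨j, j.2, hj⟩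
  obtain ⟨hlt, hsat⟩ : ∃ h : DLind C x < m, TermSat (C ⟨DLind C x, h⟩) x := Nat.sInf_mem hne
  constructor
  · intro h
    refine ⟨by rwa [show (⟨DLind C x, hlt⟩ : Fin m) = i from Fin.ext h] at hsat,
      fun j hji hj => ?_⟩
    have : DLind C x ≤ j := Nat.sInf_le ⟨j.2, hj⟩
    omega
  · rintro ⟨hi, hmin⟩
    refine le_antisymm (Nat.sInf_le ⟨i.2, hi⟩) (not_lt.1 fun hlt' => ?_)
    exact hmin ⟨_, hlt⟩ hlt' hsat

lemma exists_DLind_eq (hx : ∃ j, TermSat (C j) x) : ∃ i : Fin m, DLind C x = i :=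
  let ⟨j, hj⟩ := hx
  let ⟨hlt, _⟩ := Nat.sInf_mem (⟨j, j.2, hj⟩ : {k : ℕ | ∃ h : k < m, TermSat (C ⟨k, h⟩) x}.Nonempty)
  ⟨⟨_, hlt⟩, rfl⟩

lemma DLevalSub_eq_DLeval {V : Type} [Inhabited V] (v : Fin m → V) {J : Finset (Fin m)}
    {i : Fin m} (hi : DLind C x = i) (hiJ : i ∈ J) (hx : ∃ j, TermSat (C j) x) :
    DLevalSub C v J x = DLeval C v x := by
  have hsat := ((DLind_eq_iff hx i).1 hi).1
  have hmem : (i : ℕ) ∈ {k : ℕ | ∃ h : k < m, (⟨k, h⟩ : Fin m) ∈ J ∧ TermSat (C ⟨k, h⟩) x} :=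
    ⟨i.2, hiJ, hsat⟩
  obtain ⟨hlt, -, hsat'⟩ := Nat.sInf_mem ⟨_, hmem⟩
  have hsub : DLindSub C J x = DLind C x :=
    le_antisymm (hi ▸ Nat.sInf_le hmem) (Nat.sInf_le ⟨hlt, hsat'⟩)
  simp only [DLevalSub, DLeval, hsub]

end IndexFunction

section Exchange

variable {n : ℕ} {α : ℝ}

theorem restPr_agree_up_to_stars (t : Restriction n) {S : Finset (Fin n)}
    (ht : ∀ v ∈ S, t v ≠ none) {Q : Restriction n → Prop}
    (hQ : ∀ ρ, ∀ v ∈ S, ∀ c, Q (Function.update ρ v c) ↔ Q ρ) :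
    ((1 - α) / 2) ^ #S * restPr α (fun ρ => (∀ v ∈ S, ρ v = none ∨ ρ v = t v) ∧ Q ρ)
      = ((1 + α) / 2) ^ #S * restPr α (fun ρ => (∀ v ∈ S, ρ v = t v) ∧ Q ρ) := by
  induction S using Finset.induction_on generalizing Q with
  | empty => simp
  | insert v s hv ih =>
    have htv : t v ≠ none := ht v (mem_insert_self v s)
    have hupd : ∀ (ρ : Restriction n) c, ∀ u ∈ s, Function.update ρ v c u = ρ u :=
      fun ρ c u hu => Function.update_of_ne (ne_of_mem_of_not_mem hu hv) c ρ
    have hsplit : restPr α (fun ρ => (∀ u ∈ insert v s, ρ u = none ∨ ρ u = t u) ∧ Q ρ)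
        = restPr α (fun ρ => ρ v = none ∧ ((∀ u ∈ s, ρ u = none ∨ ρ u = t u) ∧ Q ρ))
          + restPr α (fun ρ => ρ v = t v ∧ ((∀ u ∈ s, ρ u = none ∨ ρ u = t u) ∧ Q ρ)) := by
      rw [← restPr_or]
      swap
      · rintro ρ ⟨h₁, -⟩ ⟨h₂, -⟩
        exact htv (h₂ ▸ h₁)
      congr 1; ext ρ; simp only [forall_mem_insert]; tauto
    have hswap := restPr_swap (α := α) v none (t v)
      (P := fun ρ => (∀ u ∈ s, ρ u = none ∨ ρ u = t u) ∧ Q ρ) fun ρ c =>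
        and_congr (forall₂_congr fun u hu => by rw [hupd ρ c u hu]) (hQ ρ v (mem_insert_self v s) c)
    simp only [coordW, if_true, if_neg htv] at hswap
    have hIH := ih (fun u hu => ht u (mem_insert_of_mem hu)) (Q := fun ρ => ρ v = t v ∧ Q ρ)
      fun ρ u hu c => by
        rw [Function.update_of_ne (ne_of_mem_of_not_mem hu hv).symm,
          hQ ρ u (mem_insert_of_mem hu) c]
    have hL : restPr α (fun ρ => (∀ u ∈ s, ρ u = none ∨ ρ u = t u) ∧ ρ v = t v ∧ Q ρ)
        = restPr α (fun ρ => ρ v = t v ∧ ((∀ u ∈ s, ρ u = none ∨ ρ u = t u) ∧ Q ρ)) := by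
      congr 1; ext ρ; tauto
    have hS : restPr α (fun ρ => (∀ u ∈ s, ρ u = t u) ∧ ρ v = t v ∧ Q ρ)
        = restPr α (fun ρ => (∀ u ∈ insert v s, ρ u = t u) ∧ Q ρ) := by
      congr 1; ext ρ; simp only [forall_mem_insert]; tauto
    rw [hL, hS] at hIH
    rw [card_insert_of_notMem hv, hsplit, pow_succ, pow_succ]
    linear_combination ((1 - α) / 2) ^ #s * hswap + (1 + α) / 2 * hIH

end Exchange

section MomentBound

variable {n m : ℕ} (C : Fin m → Term n)

def termVars (T : Term n) : Finset (Fin n) := univ.filter fun v => T v ≠ none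

def AvoidsFirst (k : ℕ) (ρ : Restriction n) : Prop :=
  ∃ x, Compatible ρ x ∧ ∀ j : Fin m, (j : ℕ) < k → ¬ TermSat (C j) x

/-- `Useful C ρ i` with the constraints of `ρ` on the variables of `C i` dropped, so that it is
insensitive to those variables. -/
def UsefulOffTerm (i : Fin m) (ρ : Restriction n) : Prop :=
  ∃ x, TermSat (C i) x ∧ (∀ j : Fin m, j < i → ¬ TermSat (C j) x) ∧
    ∀ v b, C i v = none → ρ v = some b → x v = b

variable {C}

lemma AvoidsFirst.mono {k l : ℕ} {ρ : Restriction n} (h : AvoidsFirst C l ρ) (hkl : k ≤ l) :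
    AvoidsFirst C k ρ :=
  let ⟨x, hx, hav⟩ := h
  ⟨x, hx, fun j hj => hav j (hj.trans_le hkl)⟩

lemma usefulOffTerm_update_iff {i : Fin m} (ρ : Restriction n) {v : Fin n}
    (hv : v ∈ termVars (C i)) (c : Option Bool) :
    UsefulOffTerm C i (Function.update ρ v c) ↔ UsefulOffTerm C i ρ := by
  have hne : ∀ u, C i u = none → u ≠ v := fun u hu h => (mem_filter.1 hv).2 (h ▸ hu)
  simp only [UsefulOffTerm]
  refine exists_congr fun x => and_congr_right' <| and_congr_right' <|
    forall₂_congr fun u b => imp_congr_right fun hu => ?_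
  rw [Function.update_of_ne (hne u hu)]

lemma Useful.agree_up_to_stars {i : Fin m} {ρ : Restriction n} (hdef : ∀ x, ∃ j, TermSat (C j) x)
    (h : Useful C ρ i) :
    (∀ v ∈ termVars (C i), ρ v = none ∨ ρ v = C i v) ∧ UsefulOffTerm C i ρ := by
  obtain ⟨x, hcomp, hind⟩ := h
  obtain ⟨hsat, hmin⟩ := (DLind_eq_iff (hdef x) i).1 hind
  refine ⟨fun v hv => ?_, x, hsat, hmin, fun v b _ hρ => hcomp v b hρ⟩
  cases hρ : ρ v with
  | none => exact Or.inl rfl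
  | some b =>
    obtain ⟨c, hc⟩ := Option.ne_none_iff_exists'.1 (mem_filter.1 hv).2
    rw [hc, ← hsat v c hc, ← hcomp v b hρ]
    exact Or.inr rfl

lemma UsefulOffTerm.avoidsFirst {i : Fin m} {ρ : Restriction n}
    (h : UsefulOffTerm C i ρ) (hagree : ∀ v ∈ termVars (C i), ρ v = C i v) :
    AvoidsFirst C i ρ ∧ ¬ AvoidsFirst C (i + 1) ρ := by
  obtain ⟨x, hsat, hmin, hoff⟩ := h
  have hvars : ∀ v b, ρ v = some b → v ∈ termVars (C i) → C i v = some b := fun v b hρ hv =>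
    (hagree v hv) ▸ hρ
  refine ⟨⟨x, fun v b hρ => ?_, fun j hj => hmin j hj⟩, ?_⟩
  · by_cases hv : C i v = none
    · exact hoff v b hv hρ
    · exact hsat v b (hvars v b hρ (mem_filter.2 ⟨mem_univ v, hv⟩))
  · rintro ⟨y, hy, hav⟩
    refine hav i (Nat.lt_succ_self i) fun v c hc => hy v c ?_
    have hv : v ∈ termVars (C i) := mem_filter.2 ⟨mem_univ v, by simp [hc]⟩
    rw [hagree v hv, hc]

variable {α : ℝ}

lemma qL_le (hα0 : 0 ≤ α) (hα1 : α < 1) (hdef : ∀ x, ∃ j, TermSat (C j) x) (i : Fin m) :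
    qL C α i ≤ ((1 + α) / (1 - α)) ^ termWidth (C i) *
      (restPr α (AvoidsFirst C i) - restPr α (AvoidsFirst C (i + 1))) := by
  set k := termWidth (C i)
  have hpos : 0 < (1 - α) / 2 := by linarith
  have hne : 1 - α ≠ 0 := by linarith
  have hR : 0 ≤ (1 + α) / (1 - α) := div_nonneg (by linarith) (by linarith)
  have hex := restPr_agree_up_to_stars (α := α) (C i) (S := termVars (C i))
    (fun v hv => (mem_filter.1 hv).2) fun ρ v hv c => usefulOffTerm_update_iff (i := i) ρ hv c
  have hloose : qL C α i ≤ restPr α fun ρ =>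
      (∀ v ∈ termVars (C i), ρ v = none ∨ ρ v = C i v) ∧ UsefulOffTerm C i ρ := by
    rw [qL_eq_restPr]
    exact restPr_mono hα0 hα1.le fun ρ h => Useful.agree_up_to_stars hdef h
  have hstrict : (restPr α fun ρ => (∀ v ∈ termVars (C i), ρ v = C i v) ∧ UsefulOffTerm C i ρ)
      ≤ restPr α (AvoidsFirst C i) - restPr α (AvoidsFirst C (i + 1)) := by
    rw [← restPr_and_not fun ρ h => h.mono i.val.le_succ]
    exact restPr_mono hα0 hα1.le fun ρ h => h.2.avoidsFirst h.1
  calc qL C α i ≤ _ := hloose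
    _ = ((1 + α) / (1 - α)) ^ k *
          restPr α (fun ρ => (∀ v ∈ termVars (C i), ρ v = C i v) ∧ UsefulOffTerm C i ρ) := by
        rw [show (1 + α) / (1 - α) = ((1 + α) / 2) / ((1 - α) / 2) by field_simp, div_pow,
          div_mul_eq_mul_div, eq_div_iff (pow_pos hpos k).ne', mul_comm]
        exact hex
    _ ≤ _ := mul_le_mul_of_nonneg_left hstrict (pow_nonneg hR k)

theorem sum_qL_le (hα0 : 0 ≤ α) (hα1 : α < 1) {w : ℕ} (hwid : ∀ j, termWidth (C j) ≤ w)
    (hdef : ∀ x, ∃ j, TermSat (C j) x) :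
    ∑ i, qL C α i ≤ ((1 + α) / (1 - α)) ^ w := by
  set A : ℕ → ℝ := fun k => restPr α (AvoidsFirst C k)
  have hR : 1 ≤ (1 + α) / (1 - α) := (one_le_div (by linarith)).2 (by linarith)
  calc ∑ i, qL C α i ≤ ∑ i : Fin m, ((1 + α) / (1 - α)) ^ w * (A i - A (i + 1)) :=
        sum_le_sum fun i _ => (qL_le hα0 hα1 hdef i).trans <|
          mul_le_mul_of_nonneg_right (pow_le_pow_right₀ hR (hwid i)) <|
            sub_nonneg.2 <| restPr_mono hα0 hα1.le fun ρ h => h.mono i.val.le_succ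
    _ = ((1 + α) / (1 - α)) ^ w * (A 0 - A m) := by
        rw [← mul_sum, Fin.sum_univ_eq_sum_range (fun k => A k - A (k + 1)), sum_range_sub']
    _ ≤ ((1 + α) / (1 - α)) ^ w :=
        mul_le_of_le_one_right (pow_nonneg (zero_le_one.trans hR) w) <| by
          linarith [restPr_le_one hα0 hα1.le (AvoidsFirst C 0),
            restPr_nonneg hα0 hα1.le (AvoidsFirst C m)]

theorem sum_pL_rpow_le {γ : ℝ} (hγ0 : 0 < γ) (hγ1 : γ ≤ 1) {w : ℕ}
    (hwid : ∀ j, termWidth (C j) ≤ w) (hdef : ∀ x, ∃ j, TermSat (C j) x) :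
    ∑ i : Fin m, pL C i ^ γ ≤ ((2 - γ) / γ) ^ w := by
  have h := sum_qL_le (C := C) (α := 1 - γ) (by linarith) (by linarith) hwid hdef
  rw [show (1 + (1 - γ)) / (1 - (1 - γ)) = (2 - γ) / γ by ring_nf] at h
  refine (sum_le_sum fun i _ => ?_).trans h
  rw [qL_eq_restPr]
  exact pr_rpow_le_restPr_exists_compatible hγ0 hγ1 _

end MomentBound

section Threshold

lemma card_filter_le_mul_rpow {ι : Type*} [Fintype ι] {p : ι → ℝ} (hp : ∀ i, 0 ≤ p i)
    {γ δ M : ℝ} (hγ : 0 ≤ γ) (hδ : 0 ≤ δ) (h : ∑ i, p i ^ γ ≤ M) :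
    #(univ.filter fun i => δ ≤ p i) * δ ^ γ ≤ M :=
  calc (#(univ.filter fun i => δ ≤ p i) : ℝ) * δ ^ γ
      = ∑ i ∈ univ.filter (fun i => δ ≤ p i), δ ^ γ := by rw [sum_const, nsmul_eq_mul]
    _ ≤ ∑ i ∈ univ.filter (fun i => δ ≤ p i), p i ^ γ :=
        sum_le_sum fun i hi => Real.rpow_le_rpow hδ (mem_filter.1 hi).2 hγ
    _ ≤ ∑ i, p i ^ γ :=
        sum_le_sum_of_subset_of_nonneg (filter_subset _ _) fun i _ _ => Real.rpow_nonneg (hp i) _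
    _ ≤ M := h

lemma sum_filter_lt_le_mul_rpow {ι : Type*} [Fintype ι] {p : ι → ℝ} (hp : ∀ i, 0 ≤ p i)
    {γ δ M : ℝ} (hγ : γ ≤ 1) (hδ : 0 ≤ δ) (h : ∑ i, p i ^ γ ≤ M) :
    ∑ i ∈ univ.filter (fun i => p i < δ), p i ≤ M * δ ^ (1 - γ) :=
  calc ∑ i ∈ univ.filter (fun i => p i < δ), p i
      ≤ ∑ i ∈ univ.filter (fun i => p i < δ), p i ^ γ * δ ^ (1 - γ) := by
        refine sum_le_sum fun i hi => ?_
        calc p i = p i ^ γ * p i ^ (1 - γ) := by rw [← Real.rpow_add' (hp i) (by norm_num)]; simp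
          _ ≤ p i ^ γ * δ ^ (1 - γ) := mul_le_mul_of_nonneg_left
              (Real.rpow_le_rpow (hp i) (mem_filter.1 hi).2.le (by linarith))
              (Real.rpow_nonneg (hp i) _)
    _ = (∑ i ∈ univ.filter (fun i => p i < δ), p i ^ γ) * δ ^ (1 - γ) := (sum_mul ..).symm
    _ ≤ M * δ ^ (1 - γ) := by
        refine mul_le_mul_of_nonneg_right ((sum_le_sum_of_subset_of_nonneg (filter_subset _ _)
          fun i _ _ => Real.rpow_nonneg (hp i) _).trans h) (Real.rpow_nonneg hδ _)

variable {n m : ℕ} {C : Fin m → Term n}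

lemma pL_nonneg (C : Fin m → Term n) (i : ℕ) : 0 ≤ pL C i := pr_nonneg _

lemma pr_DLeval_ne_DLevalSub_le {V : Type} [Inhabited V] (v : Fin m → V) (J : Finset (Fin m))
    (hdef : ∀ x, ∃ j, TermSat (C j) x) :
    pr n (fun x => DLeval C v x ≠ DLevalSub C v J x) ≤ ∑ i ∈ Jᶜ, pL C i := by
  refine pr_le_sum_pr _ fun x hx => ?_
  obtain ⟨i, hi⟩ := exists_DLind_eq (hdef x)
  exact ⟨i, mem_compl.2 fun hiJ => hx (DLevalSub_eq_DLeval v hi hiJ (hdef x)).symm, hi⟩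

def thresholdSublist (C : Fin m → Term n) (d : Fin m) (δ : ℝ) : Finset (Fin m) :=
  insert d (univ.filter fun i => δ ≤ pL C i)

variable {d : Fin m} {γ δ M : ℝ}

lemma card_thresholdSublist_le (hγ : 0 ≤ γ) (hδ : 0 < δ) (h : ∑ i : Fin m, pL C i ^ γ ≤ M) :
    (#(thresholdSublist C d δ) : ℝ) ≤ M / δ ^ γ + 1 := by
  have hcount := card_filter_le_mul_rpow (fun i : Fin m => pL_nonneg C i) hγ hδ.le h
  rw [← le_div_iff₀ (Real.rpow_pos_of_pos hδ γ)] at hcount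
  exact (Nat.cast_le.2 (card_insert_le _ _)).trans (by push_cast; linarith)

lemma pL_le_of_mem_thresholdSublist {i i' : Fin m} (hi : i ∈ thresholdSublist C d δ) (hid : i ≠ d)
    (hi' : i' ∉ thresholdSublist C d δ) : pL C i' ≤ pL C i := by
  have hδi : δ ≤ pL C i := (mem_filter.1 ((mem_insert.1 hi).resolve_left hid)).2
  have hδi' : ¬ δ ≤ pL C i' := fun h => hi' (mem_insert_of_mem (mem_filter.2 ⟨mem_univ _, h⟩))
  linarith

lemma pr_DLeval_ne_DLevalSub_thresholdSublist_le {V : Type} [Inhabited V] (v : Fin m → V)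
    (hγ : γ ≤ 1) (hδ : 0 ≤ δ) (h : ∑ i : Fin m, pL C i ^ γ ≤ M)
    (hdef : ∀ x, ∃ j, TermSat (C j) x) :
    pr n (fun x => DLeval C v x ≠ DLevalSub C v (thresholdSublist C d δ) x) ≤ M * δ ^ (1 - γ) := by
  refine (pr_DLeval_ne_DLevalSub_le v _ hdef).trans <| le_trans ?_ <|
    sum_filter_lt_le_mul_rpow (fun i : Fin m => pL_nonneg C i) hγ hδ h
  refine sum_le_sum_of_subset_of_nonneg (fun i hi => mem_filter.2 ⟨mem_univ i, ?_⟩)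
    fun i _ _ => pL_nonneg C i.val
  exact not_le.1 fun h => mem_compl.1 hi (mem_insert_of_mem (mem_filter.2 ⟨mem_univ i, h⟩))

end Threshold

section Parameters

variable {ε G : ℝ} {w : ℕ}

lemma threshold_error_le (hε0 : 0 < ε) (hε1 : ε ≤ 1) (hG : 2 ≤ G) :
    (2 * G) ^ w * ((ε / (2 * G) ^ w) ^ 2) ^ (1 - 1 / G) ≤ ε := by
  have hB : 1 ≤ (2 * G) ^ w := one_le_pow₀ (by linarith)
  set X := ε / (2 * G) ^ w
  have hX0 : 0 < X := by positivity
  have hX1 : X ≤ 1 := (div_le_self hε0.le hB).trans hε1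
  have hexp : 1 / 2 ≤ 1 - 1 / G := by linarith [one_div_le_one_div_of_le two_pos hG]
  have hsq : (X ^ 2) ^ (1 - 1 / G) ≤ X :=
    calc (X ^ 2) ^ (1 - 1 / G) ≤ (X ^ 2) ^ (1 / 2 : ℝ) :=
          Real.rpow_le_rpow_of_exponent_ge (by positivity) (pow_le_one₀ hX0.le hX1) hexp
      _ = X := by rw [← Real.rpow_natCast, ← Real.rpow_mul hX0.le]; norm_num
  calc _ ≤ (2 * G) ^ w * X := mul_le_mul_of_nonneg_left hsq (by positivity)
    _ = ε := mul_div_cancel₀ _ (by positivity)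

lemma threshold_count_le (hw : 1 ≤ w) (hε0 : 0 < ε) (hG : 2 ≤ G) (hεG : ε⁻¹ ≤ 2 ^ (w * G)) :
    (2 * G) ^ w / ((ε / (2 * G) ^ w) ^ 2) ^ (1 / G) + 1 ≤ G ^ (7 * w) := by
  set B := (2 * G) ^ w with hB_def
  have hG0 : 0 < G := by linarith
  have hB : 1 ≤ B := one_le_pow₀ (by linarith)
  have hexp : 2 / G ≤ 1 := (div_le_one hG0).2 hG
  have hδ : ((ε / B) ^ 2) ^ (1 / G) = ε ^ (2 / G) / B ^ (2 / G) := by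
    rw [← Real.rpow_natCast, ← Real.rpow_mul (by positivity),
      Real.div_rpow hε0.le (by positivity), show ((2 : ℕ) : ℝ) * (1 / G) = 2 / G by push_cast; ring]
  have hε : (ε ^ (2 / G))⁻¹ ≤ 4 ^ w := by
    rw [← Real.inv_rpow hε0.le]
    calc ε⁻¹ ^ (2 / G) ≤ (2 ^ (w * G)) ^ (2 / G) :=
          Real.rpow_le_rpow (by positivity) hεG (by positivity)
      _ = 4 ^ w := by
          rw [← Real.rpow_mul (by norm_num), show (w : ℝ) * G * (2 / G) = ((2 * w : ℕ) : ℝ) by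
            push_cast; field_simp, Real.rpow_natCast, pow_mul]
          norm_num
  have hG6 : 16 * G ^ 2 ≤ G ^ 6 := by nlinarith [pow_le_pow_left₀ zero_le_two hG 4]
  have hGw : 2 ≤ G ^ w := hG.trans (le_self_pow₀ (by linarith) (by omega))
  have hG6w : 1 ≤ (G ^ 6) ^ w := one_le_pow₀ (one_le_pow₀ (by linarith))
  calc B / ((ε / B) ^ 2) ^ (1 / G) + 1 = B * B ^ (2 / G) * (ε ^ (2 / G))⁻¹ + 1 := by
        rw [hδ, div_div_eq_mul_div, div_eq_mul_inv]
    _ ≤ B * B * 4 ^ w + 1 := by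
        gcongr
        exact Real.rpow_le_self_of_one_le hB hexp
    _ = (16 * G ^ 2) ^ w + 1 := by rw [hB_def, ← mul_pow, ← mul_pow]; ring_nf
    _ ≤ (G ^ 6) ^ w + 1 := by gcongr
    _ ≤ (G ^ 6) ^ w * G ^ w := by nlinarith
    _ = G ^ (7 * w) := by rw [← mul_pow, ← pow_succ, pow_mul]

end Parameters

end DecisionList

open DecisionList

theorem decision_list_compression :
    ∃ K : ℝ, 0 < K ∧
      ∀ (n m w : ℕ) (V : Type) (_ : Inhabited V)
        (C : Fin m → Term n) (v : Fin m → V) (ε : ℝ),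
        1 ≤ w → 0 < ε → ε ≤ 1 →
        (∀ j, termWidth (C j) ≤ w) →
        ∀ (hm : 0 < m), C ⟨m - 1, Nat.sub_lt hm one_pos⟩ = (fun _ => none) →
        ∃ J : Finset (Fin m),
          (⟨m - 1, Nat.sub_lt hm one_pos⟩ : Fin m) ∈ J ∧
          (J.card : ℝ) ≤ (2 + Real.logb 2 (1 / ε) / w) ^ (K * w) ∧
          (∀ i ∈ J, i ≠ (⟨m - 1, Nat.sub_lt hm one_pos⟩ : Fin m) →
            ∀ i' ∉ J, pL C (i' : Fin m).val ≤ pL C i.val) ∧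
          pr n (fun x => DLeval C v x ≠ DLevalSub C v J x) ≤ ε := by
  refine ⟨7, by norm_num, fun n m w V _ C v ε hw hε0 hε1 hwid hm hC => ?_⟩
  set d : Fin m := ⟨m - 1, Nat.sub_lt hm one_pos⟩
  have hdef : ∀ x, ∃ j, TermSat (C j) x := fun x => ⟨d, fun i b h => by simp [d, hC] at h⟩
  set t := Real.logb 2 (1 / ε)
  set G := 2 + t / w
  have ht : 0 ≤ t := Real.logb_nonneg one_lt_two (one_le_one_div hε0 hε1)
  have hG : 2 ≤ G := le_add_of_nonneg_right (by positivity)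
  have hεG : ε⁻¹ ≤ 2 ^ (w * G) := by
    rw [← one_div, ← Real.rpow_logb two_pos (by norm_num) (one_div_pos.2 hε0)]
    refine Real.rpow_le_rpow_of_exponent_le one_le_two ?_
    rw [mul_add, mul_div_cancel₀ _ (by positivity)]
    linarith
  -- `γ = 1 / G`, so that `(2 - γ) / γ = 2 * G - 1`
  have hmoment : ∑ i : Fin m, pL C i ^ (1 / G) ≤ (2 * G) ^ w := by
    refine (sum_pL_rpow_le (by positivity) (by rw [div_le_one] <;> linarith) hwid hdef).trans ?_
    exact pow_le_pow_left₀ (by field_simp; linarith) (by field_simp; linarith) w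
  set δ := (ε / (2 * G) ^ w) ^ 2
  refine ⟨thresholdSublist C d δ, mem_insert_self d _, ?_,
    fun i hi hid i' hi' => pL_le_of_mem_thresholdSublist hi hid hi', ?_⟩
  · calc (#(thresholdSublist C d δ) : ℝ) ≤ (2 * G) ^ w / δ ^ (1 / G) + 1 :=
          card_thresholdSublist_le (by positivity) (by positivity) hmoment
      _ ≤ G ^ (7 * w) := threshold_count_le hw hε0 hG hεG
      _ = G ^ ((7 : ℝ) * w) := by rw [← Real.rpow_natCast]; push_cast; ring_nf
  · exact (pr_DLeval_ne_DLevalSub_thresholdSublist_le v (by rw [div_le_one] <;> linarith)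
      (by positivity) hmoment hdef).trans (threshold_error_le hε0 hε1 hG)
end
end

section
/- For every w ≥ 1 there exists a function L : {0,1}^w → {0,1} (hence expressible as a width-w decision list) such that for every width-w decision list L' of size at most 2^w/(100w), Pr_{x uniform on {0,1}^w}[L(x) ≠ L'(x)] > 1/3. -/
open Finset
open scoped Classical BigOperators

noncomputable section

/-! Counting. With `N = 2 ^ w`, the Hamming ball of radius `N / 3` in the `2 ^ N` Boolean functions
on `{0,1}^w` has at most `∑_{k ≤ N/3} C(N, k) ≤ 3 ^ N / 2 ^ (N - N/3)` elements, and there are at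
most `(M + 1) (2 · 3 ^ w) ^ M` decision lists of size at most `M = N / (100 w)`. Since
`3 ^ 5 ≤ 2 ^ 8`, the balls around all these lists cannot cover every function. -/

theorem card_filter_hammingDist_le {α : Type*} [Fintype α] (g : α → Bool) (t : ℕ) :
    #{f : α → Bool | hammingDist f g ≤ t} ≤ ∑ k ∈ range (t + 1), (Fintype.card α).choose k := by
  let flipOn : Finset α → α → Bool := fun s x => if x ∈ s then !g x else g x
  have hsub : ({f : α → Bool | hammingDist f g ≤ t} : Finset _) ⊆
      (range (t + 1)).biUnion fun k => (powersetCard k univ).image flipOn := by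
    intro f hf
    rw [mem_filter] at hf
    refine mem_biUnion.2 ⟨hammingDist f g, mem_range.2 (Nat.lt_succ_of_le hf.2), ?_⟩
    refine mem_image.2 ⟨({x | f x ≠ g x} : Finset α), mem_powersetCard_univ.2 rfl, funext fun x => ?_⟩
    cases hfx : f x <;> cases hgx : g x <;> simp [flipOn, hfx, hgx]
  calc _ ≤ _ := card_le_card hsub
    _ ≤ ∑ k ∈ range (t + 1), #((powersetCard k univ).image flipOn) := card_biUnion_le
    _ ≤ ∑ k ∈ range (t + 1), #(powersetCard k (univ : Finset α)) :=
        sum_le_sum fun _ _ => card_image_le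
    _ = _ := by simp only [card_powersetCard, card_univ]

theorem sum_range_choose_mul_two_pow_le (N t : ℕ) :
    (∑ k ∈ range (t + 1), N.choose k) * 2 ^ (N - t) ≤ 3 ^ N := by
  calc (∑ k ∈ range (t + 1), N.choose k) * 2 ^ (N - t)
      ≤ ∑ k ∈ range (t + 1), 2 ^ (N - k) * N.choose k := by
        rw [sum_mul]
        refine sum_le_sum fun k hk => ?_
        rw [mul_comm]
        exact Nat.mul_le_mul_right _ (Nat.pow_le_pow_right two_pos (by grind))
    _ ≤ ∑ k ∈ range (N + 1), 2 ^ (N - k) * N.choose k := by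
        refine sum_le_sum_of_ne_zero fun k _ hk => mem_range.2 ?_
        by_contra! h
        exact hk (by rw [Nat.choose_eq_zero_of_lt (by omega), mul_zero])
    _ = 3 ^ N := by simpa using (add_pow (1 : ℕ) 2 N).symm

theorem exists_forall_lt_hammingDist {ι α : Type*} [Fintype ι] [Fintype α]
    (F : ι → α → Bool) (t : ℕ)
    (h : Fintype.card ι * ∑ k ∈ range (t + 1), (Fintype.card α).choose k < 2 ^ Fintype.card α) :
    ∃ g : α → Bool, ∀ i, t < hammingDist g (F i) := by
  by_contra! hcover
  have hsub : (univ : Finset (α → Bool)) ⊆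
      univ.biUnion fun i => {f : α → Bool | hammingDist f (F i) ≤ t} := fun g _ => by
    obtain ⟨i, hi⟩ := hcover g
    exact mem_biUnion.2 ⟨i, mem_univ _, mem_filter.2 ⟨mem_univ _, hi⟩⟩
  have hcard := (card_le_card hsub).trans card_biUnion_le
  simp only [card_univ, Fintype.card_fun, Fintype.card_bool] at hcard
  refine h.not_ge (hcard.trans ?_)
  calc _ ≤ ∑ _i : ι, ∑ k ∈ range (t + 1), (Fintype.card α).choose k :=
        sum_le_sum fun i _ => card_filter_hammingDist_le (F i) t
    _ = _ := by rw [sum_const, card_univ, smul_eq_mul]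

theorem three_pow_five_mul_le_two_pow_eight_mul (a : ℕ) : 3 ^ (5 * a) ≤ 2 ^ (8 * a) := by
  rw [pow_mul, pow_mul]
  exact Nat.pow_le_pow_left (by norm_num) a

theorem succ_mul_pow_mul_three_pow_lt {w M N t : ℕ} (hw : 1 ≤ w) (hN : 0 < N)
    (hM : M * (100 * w) ≤ N) (ht : 3 * t ≤ N) :
    (M + 1) * (2 * 3 ^ w) ^ M * 3 ^ N < 2 ^ (2 * N - t) := by
  have hMw : M ≤ w * M := Nat.le_mul_of_pos_left M hw
  have hwM : 100 * (w * M) ≤ N := by linarith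
  have hK : (M + 1) * (2 * 3 ^ w) ^ M ≤ 2 ^ (2 * M) * 3 ^ (w * M) :=
    calc (M + 1) * (2 * 3 ^ w) ^ M ≤ 2 ^ M * (2 * 3 ^ w) ^ M :=
          Nat.mul_le_mul_right _ Nat.lt_two_pow_self
      _ = 2 ^ (2 * M) * 3 ^ (w * M) := by ring
  -- the fifth power lets `3 ^ 5 ≤ 2 ^ 8` stand in for `log₂ 3 < 8 / 5`
  refine lt_of_pow_lt_pow_left₀ 5 (Nat.zero_le _) ?_
  calc ((M + 1) * (2 * 3 ^ w) ^ M * 3 ^ N) ^ 5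
      ≤ (2 ^ (2 * M) * 3 ^ (w * M) * 3 ^ N) ^ 5 :=
        Nat.pow_le_pow_left (Nat.mul_le_mul_right _ hK) 5
    _ = 2 ^ (10 * M) * 3 ^ (5 * (w * M + N)) := by ring
    _ ≤ 2 ^ (10 * M) * 2 ^ (8 * (w * M + N)) :=
        Nat.mul_le_mul_left _ (three_pow_five_mul_le_two_pow_eight_mul _)
    _ = 2 ^ (10 * M + 8 * (w * M + N)) := by rw [pow_add]
    _ < 2 ^ (5 * (2 * N - t)) := Nat.pow_lt_pow_right (by norm_num) (by omega)
    _ = (2 ^ (2 * N - t)) ^ 5 := by rw [← pow_mul, mul_comm]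

theorem card_mul_sum_choose_lt {w M N : ℕ} (hw : 1 ≤ w) (hN : 0 < N) (hM : M * (100 * w) ≤ N) :
    (M + 1) * (2 * 3 ^ w) ^ M * ∑ k ∈ range (N / 3 + 1), N.choose k < 2 ^ N := by
  refine lt_of_mul_lt_mul_right (a := 2 ^ (N - N / 3)) ?_ (Nat.zero_le _)
  calc (M + 1) * (2 * 3 ^ w) ^ M * (∑ k ∈ range (N / 3 + 1), N.choose k) * 2 ^ (N - N / 3)
      ≤ (M + 1) * (2 * 3 ^ w) ^ M * 3 ^ N := by
        rw [mul_assoc]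
        exact Nat.mul_le_mul_left _ (sum_range_choose_mul_two_pow_le N (N / 3))
    _ < 2 ^ (2 * N - N / 3) := succ_mul_pow_mul_three_pow_lt hw hN hM (Nat.mul_div_le N 3)
    _ = 2 ^ N * 2 ^ (N - N / 3) := by rw [← pow_add]; congr 1; omega

abbrev DecisionListUpTo (n M : ℕ) : Type :=
  Σ m : Fin (M + 1), (Fin m → Term n) × (Fin m → Bool)

theorem card_decisionListUpTo_le (n M : ℕ) :
    Fintype.card (DecisionListUpTo n M) ≤ (M + 1) * (2 * 3 ^ n) ^ M := by
  have hcard : ∀ m : ℕ, Fintype.card ((Fin m → Term n) × (Fin m → Bool)) = (2 * 3 ^ n) ^ m := by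
    intro m
    simp only [Fintype.card_prod, Fintype.card_fun, Fintype.card_option, Fintype.card_bool,
      Fintype.card_fin]
    ring
  rw [Fintype.card_sigma]
  calc ∑ m : Fin (M + 1), Fintype.card ((Fin m → Term n) × (Fin m → Bool))
      ≤ ∑ _m : Fin (M + 1), (2 * 3 ^ n) ^ M := sum_le_sum fun m _ => by
        rw [hcard]; exact Nat.pow_le_pow_right (by positivity) (Nat.lt_succ_iff.1 m.2)
    _ = (M + 1) * (2 * 3 ^ n) ^ M := by simp

theorem pr_ne_eq_hammingDist {n : ℕ} (f g : (Fin n → Bool) → Bool) :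
    pr n (fun x => f x ≠ g x) = hammingDist f g / 2 ^ n := by
  simp [pr, hammingDist]

theorem approx_lower_bound (w : ℕ) (hw : 1 ≤ w) :
    ∃ L : (Fin w → Bool) → Bool,
      ∀ (m : ℕ) (C : Fin m → Term w) (v : Fin m → Bool),
        (∀ j, termWidth (C j) ≤ w) →
        ∀ (hm : 0 < m), C ⟨m - 1, Nat.sub_lt hm one_pos⟩ = (fun _ => none) →
        (m : ℝ) ≤ 2 ^ w / (100 * w) →
        1 / 3 < pr w (fun x => L x ≠ DLeval C v x) := by
  set N := 2 ^ w with hN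
  set M := N / (100 * w)
  have hcount : Fintype.card (DecisionListUpTo w M) *
      ∑ k ∈ range (N / 3 + 1), (Fintype.card (Fin w → Bool)).choose k <
        2 ^ Fintype.card (Fin w → Bool) := by
    rw [show Fintype.card (Fin w → Bool) = N by simp [hN]]
    calc _ ≤ (M + 1) * (2 * 3 ^ w) ^ M * ∑ k ∈ range (N / 3 + 1), N.choose k :=
          Nat.mul_le_mul_right _ (card_decisionListUpTo_le w M)
      _ < 2 ^ N := card_mul_sum_choose_lt hw (by positivity) (Nat.div_mul_le_self N _)
  obtain ⟨L, hL⟩ := exists_forall_lt_hammingDist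
    (fun p : DecisionListUpTo w M => DLeval p.2.1 p.2.2) (N / 3) hcount
  refine ⟨L, fun m C v _ _ _ hmle => ?_⟩
  have hmM : m ≤ M := by
    rw [le_div_iff₀ (by positivity)] at hmle
    rw [Nat.le_div_iff_mul_le (by positivity), hN]
    exact_mod_cast hmle
  have hfar : N / 3 < hammingDist L (DLeval C v) := hL ⟨⟨m, Nat.lt_succ_of_le hmM⟩, C, v⟩
  have hN3 : ((N : ℕ) : ℝ) < 3 * hammingDist L (DLeval C v) := by exact_mod_cast (by omega)
  rw [pr_ne_eq_hammingDist, lt_div_iff₀ (by positivity)]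
  push_cast [hN] at hN3
  linarith
end
end

section
/- For every w and n > 2w there exists a width-w decision list L : {0,1}^n → {0,1} that is not equal (as a function) to any width-w decision list of size smaller than C(n,w)/n^2, where C(n,w) is the binomial coefficient. -/
open Finset
open scoped Classical BigOperators

noncomputable section

/-!
The lists `L_v`, whose rules are the monotone terms of the `w`-subsets of `Fin n` followed by a
default rule, compute pairwise distinct functions: the `w`-subsets form an antichain, so the
indicator of a `w`-subset `s` reaches the rule of `s` and no earlier one. That is
`2 ^ (C(n,w) + 1)` functions, while decision lists with at most `T = C(n,w) / n^2` rules, even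
over arbitrary terms, compute at most `(2 * 3 ^ n) ^ (T + 1) ≤ 2 ^ (2n(T + 1))` functions, and
`2n(T + 1) ≤ C(n,w)` once `n^2 < C(n,w)`. When `C(n,w) ≤ n^2` there is nothing to prove, since
every decision list has at least one rule.
-/

theorem DLind_eq_of_termSat {n m : ℕ} {C : Fin m → Term n} {x : Fin n → Bool} (i : Fin m)
    (hi : TermSat (C i) x) (hbefore : ∀ j < i, ¬ TermSat (C j) x) : DLind C x = i := by
  refine le_antisymm (Nat.sInf_le ⟨i.isLt, hi⟩) (le_csInf ⟨i, i.isLt, hi⟩ ?_)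
  rintro k ⟨hk, hsat⟩
  by_contra! hki
  exact hbefore ⟨k, hk⟩ hki hsat

theorem DLeval_eq_of_termSat {n m : ℕ} {V : Type} [Inhabited V] {C : Fin m → Term n}
    (v : Fin m → V) {x : Fin n → Bool} (i : Fin m)
    (hi : TermSat (C i) x) (hbefore : ∀ j < i, ¬ TermSat (C j) x) : DLeval C v x = v i := by
  have hind := DLind_eq_of_termSat i hi hbefore
  simp only [DLeval, hind, i.isLt, dif_pos, Fin.eta]

section MonotoneTerms

variable {n : ℕ}

def termOf (s : Finset (Fin n)) : Term n :=
  fun i => if i ∈ s then some true else none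

theorem termWidth_termOf (s : Finset (Fin n)) : termWidth (termOf s) = s.card := by
  unfold termWidth
  congr 1
  ext i
  by_cases hi : i ∈ s <;> simp [termOf, hi]

theorem termSat_termOf_indicator_iff (s t : Finset (Fin n)) :
    TermSat (termOf s) (fun i => decide (i ∈ t)) ↔ s ⊆ t := by
  constructor
  · intro h i hi
    simpa using h i true (by simp [termOf, hi])
  · intro h i b hb
    by_cases hi : i ∈ s
    · simp only [termOf, if_pos hi, Option.some.injEq] at hb
      simp [← hb, h hi]
    · simp [termOf, hi] at hb

end MonotoneTerms

section SetTerms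

variable {n M : ℕ} (S : Fin M → Finset (Fin n))

def setTerms : Fin (M + 1) → Term n :=
  Fin.snoc (α := fun _ => Term n) (fun j => termOf (S j)) fun _ => none

theorem termWidth_setTerms_le {w : ℕ} (hS : ∀ j, (S j).card ≤ w) (j : Fin (M + 1)) :
    termWidth (setTerms S j) ≤ w := by
  induction j using Fin.lastCases with
  | last => simp [setTerms, termWidth]
  | cast j => simpa [setTerms, termWidth_termOf] using hS j

theorem DLeval_setTerms_indicator {V : Type} [Inhabited V] (v : Fin (M + 1) → V)
    (hanti : ∀ i j, S i ⊆ S j → i = j) (j : Fin M) :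
    DLeval (setTerms S) v (fun i => decide (i ∈ S j)) = v j.castSucc := by
  refine DLeval_eq_of_termSat v _ (by simp [setTerms, termSat_termOf_indicator_iff]) ?_
  intro k hk
  induction k using Fin.lastCases with
  | last => exact absurd hk (not_lt.2 (Fin.le_last _))
  | cast k =>
    simp only [setTerms, Fin.snoc_castSucc, termSat_termOf_indicator_iff]
    exact fun hkj => (Fin.castSucc_lt_castSucc_iff.1 hk).ne (hanti k j hkj)

theorem DLeval_setTerms_const_false {V : Type} [Inhabited V] (v : Fin (M + 1) → V)
    (hne : ∀ j, (S j).Nonempty) : DLeval (setTerms S) v (fun _ => false) = v (Fin.last M) := by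
  refine DLeval_eq_of_termSat v _ (by simp [setTerms, TermSat]) ?_
  intro k hk
  induction k using Fin.lastCases with
  | last => exact absurd hk (lt_irrefl _)
  | cast k =>
    have h := termSat_termOf_indicator_iff (S k) ∅
    simp only [Finset.notMem_empty, decide_false, Finset.subset_empty] at h
    simpa [setTerms, h] using (hne k).ne_empty

theorem DLeval_setTerms_injective {V : Type} [Inhabited V]
    (hanti : ∀ i j, S i ⊆ S j → i = j) (hne : ∀ j, (S j).Nonempty) :
    Function.Injective fun v : Fin (M + 1) → V => DLeval (setTerms S) v := by
  intro v v' h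
  funext j
  induction j using Fin.lastCases with
  | last => simpa [DLeval_setTerms_const_false S _ hne] using congrFun h fun _ => false
  | cast j => simpa [DLeval_setTerms_indicator S _ hanti] using congrFun h fun i => decide (i ∈ S j)

end SetTerms

def dlFunctions (n T : ℕ) : Finset ((Fin n → Bool) → Bool) :=
  (range (T + 1)).biUnion fun m =>
    univ.image fun p : (Fin m → Term n) × (Fin m → Bool) => DLeval p.1 p.2

theorem DLeval_mem_dlFunctions {n m T : ℕ} (C : Fin m → Term n) (v : Fin m → Bool)
    (hm : m ≤ T) : DLeval C v ∈ dlFunctions n T :=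
  mem_biUnion.2 ⟨m, mem_range.2 (Nat.lt_succ_of_le hm), mem_image.2 ⟨(C, v), mem_univ _, rfl⟩⟩

theorem two_mul_three_pow_le_four_pow {n : ℕ} (hn : 3 ≤ n) : 2 * 3 ^ n ≤ 4 ^ n := by
  induction n, hn using Nat.le_induction with
  | base => norm_num
  | succ k _ ih => rw [pow_succ, pow_succ]; omega

theorem card_dlFunctions_lt {n : ℕ} (hn : 3 ≤ n) (T : ℕ) :
    (dlFunctions n T).card < 2 ^ (2 * n * (T + 1)) := by
  calc (dlFunctions n T).card
      ≤ ∑ m ∈ range (T + 1), (2 * 3 ^ n) ^ m := by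
        refine card_biUnion_le.trans (sum_le_sum fun m _ => card_image_le.trans ?_)
        simp [mul_pow, mul_comm]
    _ < (2 * 3 ^ n) ^ (T + 1) :=
        Nat.geomSum_lt (by have := Nat.one_le_pow n 3 three_pos; omega) fun k hk => mem_range.1 hk
    _ ≤ (4 ^ n) ^ (T + 1) := Nat.pow_le_pow_left (two_mul_three_pow_le_four_pow hn) _
    _ = 2 ^ (2 * n * (T + 1)) := by rw [← pow_mul, show (4 : ℕ) = 2 ^ 2 by rfl, ← pow_mul, mul_assoc]

theorem exists_notMem_of_injective_of_card_lt {α β : Type*} [Fintype α] {f : α → β}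
    (hf : Function.Injective f) {A : Finset β} (hA : A.card < Fintype.card α) :
    ∃ a, f a ∉ A := by
  by_contra! h
  exact (card_le_card_of_injOn f (fun a _ => h a) hf.injOn).not_gt (by rwa [card_univ])

theorem two_mul_mul_div_sq_add_one_le {n M : ℕ} (hn : 4 ≤ n) (hM : n ^ 2 ≤ M) :
    2 * n * (M / n ^ 2 + 1) ≤ M := by
  have hdiv : M / n ^ 2 * n ^ 2 ≤ M := Nat.div_mul_le_self M _
  refine Nat.le_of_mul_le_mul_left ?_ (by omega : 0 < n)
  calc n * (2 * n * (M / n ^ 2 + 1)) = 2 * (M / n ^ 2 * n ^ 2) + 2 * n ^ 2 := by ring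
    _ ≤ 4 * M := by omega
    _ ≤ n * M := Nat.mul_le_mul_right M hn

def wSubsets (n w : ℕ) (j : Fin (univ.powersetCard w : Finset (Finset (Fin n))).card) :
    Finset (Fin n) :=
  ((univ.powersetCard w).equivFin.symm j).1

theorem card_wSubsets (n w : ℕ) (j) : (wSubsets n w j).card = w :=
  (mem_powersetCard.1 ((univ.powersetCard w).equivFin.symm j).2).2

theorem wSubsets_antichain (n w : ℕ) (i j) (h : wSubsets n w i ⊆ wSubsets n w j) : i = j :=
  (univ.powersetCard w).equivFin.symm.injective <| Subtype.ext <|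
    eq_of_subset_of_card_le h ((card_wSubsets n w j).trans (card_wSubsets n w i).symm).le

theorem four_le_of_sq_lt_choose {n w : ℕ} (hn : n ≠ 0) (h : n ^ 2 < n.choose w) : 4 ≤ n := by
  by_contra! hlt
  have := h.trans_le (Nat.choose_le_middle w n)
  interval_cases n <;> simp at this hn

theorem exists_DLeval_setTerms_wSubsets_notMem_dlFunctions {n w : ℕ} (hn : 4 ≤ n) (hw : 0 < w)
    (hsq : n ^ 2 ≤ n.choose w) :
    ∃ v, DLeval (setTerms (wSubsets n w)) v ∉ dlFunctions n (n.choose w / n ^ 2) := by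
  refine exists_notMem_of_injective_of_card_lt (DLeval_setTerms_injective (wSubsets n w)
    (wSubsets_antichain n w) fun j => card_pos.1 (by rw [card_wSubsets]; exact hw)) ?_
  calc _ < 2 ^ (2 * n * (n.choose w / n ^ 2 + 1)) := card_dlFunctions_lt (by omega) _
    _ ≤ 2 ^ (n.choose w + 1) :=
        Nat.pow_le_pow_right two_pos ((two_mul_mul_div_sq_add_one_le hn hsq).trans (Nat.le_succ _))
    _ = _ := by simp

theorem exact_lower_bound_general (w n : ℕ) :
    ∃ (m : ℕ) (hm : 0 < m) (C : Fin m → Term n) (v : Fin m → Bool),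
      (∀ j, termWidth (C j) ≤ w) ∧
      C ⟨m - 1, Nat.sub_lt hm one_pos⟩ = (fun _ => none) ∧
      ∀ (m' : ℕ) (hm' : 0 < m') (C' : Fin m' → Term n) (v' : Fin m' → Bool),
        (∀ j, termWidth (C' j) ≤ w) →
        C' ⟨m' - 1, Nat.sub_lt hm' one_pos⟩ = (fun _ => none) →
        (m' : ℝ) < (n.choose w : ℝ) / (n : ℝ) ^ 2 →
        ∃ x, DLeval C v x ≠ DLeval C' v' x := by
  by_cases hsmall : (n.choose w : ℝ) / (n : ℝ) ^ 2 ≤ 1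
  · refine ⟨1, one_pos, fun _ _ => none, fun _ => false, fun _ => by simp [termWidth], rfl, ?_⟩
    intro m' hm' _ _ _ _ hlt
    exact absurd (hlt.trans_le hsmall) (not_lt.2 (by exact_mod_cast hm'))
  rw [not_le] at hsmall
  have hn0 : n ≠ 0 := by
    rintro rfl
    norm_num at hsmall
  have hpos : (0 : ℝ) < (n : ℝ) ^ 2 := by positivity
  have hsq : n ^ 2 < n.choose w := by exact_mod_cast (one_lt_div hpos).1 hsmall
  have hw : 0 < w := Nat.pos_of_ne_zero fun h0 => by simp [h0, hn0] at hsq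
  obtain ⟨v, hv⟩ :=
    exists_DLeval_setTerms_wSubsets_notMem_dlFunctions (four_le_of_sq_lt_choose hn0 hsq) hw hsq.le
  refine ⟨_, Nat.succ_pos _, setTerms (wSubsets n w), v,
    termWidth_setTerms_le _ fun j => (card_wSubsets n w j).le, by simp [setTerms, Fin.snoc], ?_⟩
  intro m' _ C' v' _ _ hlt
  have hsize : m' ≤ n.choose w / n ^ 2 := (Nat.le_div_iff_mul_le (by positivity)).2
    (by exact_mod_cast ((lt_div_iff₀ hpos).1 hlt).le)
  exact Function.ne_iff.1 fun h => hv (h ▸ DLeval_mem_dlFunctions C' v' hsize)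

theorem exact_lower_bound (w n : ℕ) (hn : 2 * w < n) :
    ∃ (m : ℕ) (hm : 0 < m) (C : Fin m → Term n) (v : Fin m → Bool),
      (∀ j, termWidth (C j) ≤ w) ∧
      C ⟨m - 1, Nat.sub_lt hm one_pos⟩ = (fun _ => none) ∧
      ∀ (m' : ℕ) (hm' : 0 < m') (C' : Fin m' → Term n) (v' : Fin m' → Bool),
        (∀ j, termWidth (C' j) ≤ w) →
        C' ⟨m' - 1, Nat.sub_lt hm' one_pos⟩ = (fun _ => none) →
        (m' : ℝ) < (n.choose w : ℝ) / (n : ℝ) ^ 2 →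
        ∃ x, DLeval C v x ≠ DLeval C' v' x :=
  exact_lower_bound_general w n
end
end
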